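/- arXiv:1302.4011 — 4 statements merged into one kernel-verified Lean document; each statement's English description precedes it below -/
import Mathlib

section
/- Let α ∈ (0,2) and let (ξ_k)_{k∈ℕ} be i.i.d. symmetric real random variables whose common tail satisfies t^α P(|ξ_1| ≥ t) → c as t → ∞ for some constant c ∈ (0,∞). Then for a real sequence u = (u_k)_{k∈ℕ}, the series ∑_{k∈ℕ} u_k ξ_k converges almost surely if and only if ∑_{k∈ℕ} |u_k|^α < ∞. -/
open MeasureTheory ProbabilityTheory Filter Finset Topology

noncomputable section

/-- The characteristic function of a measure on `ℝ`. -/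
def charFn (μ : Measure ℝ) (θ : ℝ) : ℂ :=
  ∫ x, Complex.exp (Complex.I * θ * x) ∂μ

/-- `IsSaS α σ μ` : `μ` is the symmetric `α`-stable distribution on `ℝ` with
scale parameter `σ`, i.e. its characteristic function is `θ ↦ exp (-|σθ|^α)`. -/
def IsSaS (α σ : ℝ) (μ : Measure ℝ) : Prop :=
  IsProbabilityMeasure μ ∧ ∀ θ : ℝ, charFn μ θ = Complex.exp (-((|σ * θ| ^ α : ℝ) : ℂ))

/-- Convergence in distribution (weak convergence of laws) of a family of real random
variables, along a filter `l`, towards the law `μ`. -/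
def TendstoInDistrib {Ω ι : Type*} [MeasurableSpace Ω] (P : Measure Ω)
    (l : Filter ι) (X : ι → Ω → ℝ) (μ : Measure ℝ) : Prop :=
  ∀ g : BoundedContinuousFunction ℝ ℝ,
    Tendsto (fun i => ∫ ω, g (X i ω) ∂P) l (𝓝 (∫ x, g x ∂μ))

/-- `ν` is in the domain of normal attraction of the standard symmetric `α`-stable law:
for i.i.d. random variables with common law `ν`, `n^{-1/α} (ξ_1 + ⋯ + ξ_n)` converges
in distribution to `SαS(1)`. -/
def InDomNormAttr (α : ℝ) (ν : Measure ℝ) : Prop :=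
  ∃ μ : Measure ℝ, IsSaS α 1 μ ∧
    ∀ (Ω : Type) [MeasurableSpace Ω] (P : Measure Ω) [IsProbabilityMeasure P]
      (ξ : ℕ → Ω → ℝ), (∀ k, Measurable (ξ k)) →
      iIndepFun ξ P →
      (∀ k, Measure.map (ξ k) P = ν) →
      TendstoInDistrib P (atTop : Filter ℕ)
        (fun n ω => (n : ℝ) ^ (-(1 / α)) * ∑ k ∈ Finset.range n, ξ k ω) μ

/-- The cell `h·(k + [0,1)^d)` of the lattice `hℤ^d`. -/
def cell (d : ℕ) (h : ℝ) (k : Fin d → ℤ) : Set (Fin d → ℝ) :=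
  Set.univ.pi fun i => Set.Ico (h * k i) (h * (k i + 1))

/-- The discretization `f^h(k) = h^{d/α - d} ∫_{h(k+[0,1)^d)} f`. -/
def discr (α : ℝ) {d : ℕ} (h : ℝ) (f : (Fin d → ℝ) → ℝ) (k : Fin d → ℤ) : ℝ :=
  h ^ ((d : ℝ) / α - d) * ∫ x in cell d h k, f x

/-- The piecewise-constant lattice average `f_h(x) = h^{-d} ∫_{h(⌊x/h⌋+[0,1)^d)} f`. -/
def pconst {d : ℕ} (h : ℝ) (f : (Fin d → ℝ) → ℝ) (x : Fin d → ℝ) : ℝ :=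
  h ^ (-(d : ℝ)) * ∫ y in cell d h (fun i => ⌊x i / h⌋), f y

/-- Membership in `L^p` (for `0 < p < ∞`), stated concretely. -/
def MemLp' {E : Type*} [MeasurableSpace E] (p : ℝ) (f : E → ℝ) (μ : Measure E) : Prop :=
  AEMeasurable f μ ∧ Integrable (fun x => |f x| ^ p) μ

/-- The `L^p`-norm `(∫ |f|^p)^{1/p}`. -/
def lpNorm {E : Type*} [MeasurableSpace E] (p : ℝ) (f : E → ℝ) (μ : Measure E) : ℝ :=
  (∫ x, |f x| ^ p ∂μ) ^ (1 / p)

/-- The kernel `w_{a,b}^{(β)}(x) = a x_-^{-β} + b x_+^{-β}` (with `0^{-β} = 0`). -/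
def wker (a b β : ℝ) (x : ℝ) : ℝ :=
  a * (max (-x) 0) ^ (-β) + b * (max x 0) ^ (-β)

open scoped ENNReal



lemma stmt5_sum_transfer {f g : ℕ → ℝ} (N : ℕ) (h : ∀ k, N ≤ k → f k = g k) {L : ℝ}
    (hf : Tendsto (fun n => ∑ k ∈ Finset.range n, f k) atTop (𝓝 L)) :
    ∃ L', Tendsto (fun n => ∑ k ∈ Finset.range n, g k) atTop (𝓝 L') := by
  refine ⟨L + ∑ k ∈ Finset.range N, (g k - f k), ?_⟩
  have : Tendsto (fun n => (∑ k ∈ Finset.range n, f k) + ∑ k ∈ Finset.range N, (g k - f k))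
      atTop (𝓝 (L + ∑ k ∈ Finset.range N, (g k - f k))) := hf.add_const _
  refine this.congr' ?_
  filter_upwards [eventually_ge_atTop N] with n hn
  have : ∑ k ∈ Finset.range N, (g k - f k) = ∑ k ∈ Finset.range n, (g k - f k) := by
    refine Finset.sum_subset (Finset.range_subset_range.2 hn) ?_
    intro x hx hnx
    have : N ≤ x := by
      by_contra hlt
      exact hnx (Finset.mem_range.2 (lt_of_not_ge hlt))
    simp [h x this]
  rw [this, ← Finset.sum_add_distrib]
  congr 1
  ext k
  ring

lemma stmt5_terms_tendsto_zero {f : ℕ → ℝ} {L : ℝ}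
    (hf : Tendsto (fun n => ∑ k ∈ Finset.range n, f k) atTop (𝓝 L)) :
    Tendsto f atTop (𝓝 0) := by
  have h1 : Tendsto (fun n => ∑ k ∈ Finset.range (n + 1), f k) atTop (𝓝 L) :=
    hf.comp (tendsto_add_atTop_nat 1)
  have := h1.sub hf
  simp only [Finset.sum_range_succ, add_sub_cancel_left, sub_self] at this
  exact this

lemma stmt5_summable_of_eventually_le {f g : ℕ → ℝ} (hg0 : ∀ n, 0 ≤ g n)
    (h : ∀ᶠ n in atTop, g n ≤ f n) (hf : Summable f) : Summable g := by
  obtain ⟨N, hN⟩ := eventually_atTop.1 h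
  rw [← summable_nat_add_iff N]
  exact Summable.of_nonneg_of_le (fun n => hg0 _) (fun n => hN _ (Nat.le_add_left _ _))
    ((summable_nat_add_iff N).2 hf)

lemma stmt5_tsum_ne_top {Ω : Type*} [MeasurableSpace Ω] {μ : Measure Ω} [IsProbabilityMeasure μ]
    {A : ℕ → Set Ω} {b : ℕ → ℝ} (hb0 : ∀ n, 0 ≤ b n) (hb : Summable b)
    (h : ∀ᶠ k in atTop, μ (A k) ≤ ENNReal.ofReal (b k)) : ∑' k, μ (A k) ≠ ∞ := by
  obtain ⟨N, hN⟩ := eventually_atTop.1 h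
  set b' : ℕ → ℝ := fun k => if k < N then 1 else b k with hb'
  have hb's : Summable b' := by
    rw [← summable_nat_add_iff N]
    refine ((summable_nat_add_iff N).2 hb).congr fun n => ?_
    simp [hb', Nat.not_lt.2 (Nat.le_add_left N n)]
  have hble : ∀ k, μ (A k) ≤ ENNReal.ofReal (b' k) := by
    intro k
    by_cases hk : k < N
    · simp only [hb', if_pos hk, ENNReal.ofReal_one]
      exact prob_le_one
    · simpa [hb', if_neg hk] using hN k (Nat.le_of_not_lt hk)
  have : ∑' k, μ (A k) ≤ ENNReal.ofReal (∑' k, b' k) := by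
    rw [ENNReal.ofReal_tsum_of_nonneg (fun n => by by_cases hn : n < N <;> simp [b', hn, hb0 n]) hb's]
    exact ENNReal.tsum_le_tsum hble
  exact ne_top_of_le_ne_top ENNReal.ofReal_ne_top this



lemma stmt5_moment_bound (ν : Measure ℝ) [IsProbabilityMeasure ν] {α c T : ℝ}
    (hT : 1 ≤ T) (hα0 : 0 < α) (hα2 : α < 2) (hc : 0 < c)
    (htail : ∀ t : ℝ, T ≤ t → (ν {x : ℝ | t ≤ |x|}).toReal ≤ 2 * c * t ^ (-α)) :
    ∃ B : ℝ, 0 ≤ B ∧ ∀ M : ℝ, 0 < M →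
      ∫ x in {y : ℝ | |y| ≤ M}, x ^ 2 ∂ν ≤ 4 * T ^ 2 + B * M ^ (2 - α) := by
  have hT0 : (0 : ℝ) < T := lt_of_lt_of_le one_pos hT
  set r : ℝ := (2 : ℝ) ^ (α - 2) with hr
  have hr1 : r < 1 := Real.rpow_lt_one_of_one_lt_of_neg one_lt_two (by linarith)
  have hr0 : 0 < r := Real.rpow_pos_of_pos two_pos _
  set B : ℝ := (2 * c * (2 : ℝ) ^ α) / (1 - r) with hB
  have hB0 : 0 < B := by
    apply div_pos
    · positivity
    · linarith
  refine ⟨B, hB0.le, ?_⟩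
  -- integrability of x^2 on bounded sets
  have hmeasset : ∀ M : ℝ, MeasurableSet {y : ℝ | |y| ≤ M} :=
    fun M => measurableSet_le (continuous_abs.measurable) measurable_const
  have hint : ∀ (s : Set ℝ) (C : ℝ), MeasurableSet s → (∀ y ∈ s, |y| ≤ C) →
      IntegrableOn (fun x : ℝ => x ^ 2) s ν := by
    intro s C hs hbd
    refine Integrable.mono' (integrable_const (C ^ 2))
      ((measurable_id.pow_const 2).aestronglyMeasurable) ?_
    filter_upwards [ae_restrict_mem hs] with x hx
    have : |x| ≤ C := hbd x hx
    calc ‖x ^ 2‖ = |x| ^ 2 := by rw [Real.norm_eq_abs, abs_pow]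
    _ ≤ C ^ 2 := by nlinarith [abs_nonneg x]
  -- crude bound: I M ≤ C^2 if |y| ≤ C on the set
  have hcrude : ∀ M C : ℝ, 0 ≤ C → M ≤ C →
      ∫ x in {y : ℝ | |y| ≤ M}, x ^ 2 ∂ν ≤ C ^ 2 := by
    intro M C hC hMC
    have hsub : ∀ y ∈ {y : ℝ | |y| ≤ M}, |y| ≤ C := fun y hy => le_trans hy hMC
    calc ∫ x in {y : ℝ | |y| ≤ M}, x ^ 2 ∂ν
        ≤ ∫ _ in {y : ℝ | |y| ≤ M}, C ^ 2 ∂ν := by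
          refine setIntegral_mono_on (hint _ C (hmeasset M) hsub)
            integrableOn_const (hmeasset M) ?_
          intro x hx
          have : |x| ≤ C := hsub x hx
          nlinarith [abs_nonneg x, sq_abs x]
      _ = (ν {y : ℝ | |y| ≤ M}).toReal * C ^ 2 := by rw [setIntegral_const]; rfl
      _ ≤ 1 * C ^ 2 := by
          apply mul_le_mul_of_nonneg_right _ (by positivity)
          exact ENNReal.toReal_le_of_le_ofReal one_pos.le (by simpa using prob_le_one)
      _ = C ^ 2 := one_mul _
  -- splitting
  have hsplit : ∀ M : ℝ, 0 < M →
      ∫ x in {y : ℝ | |y| ≤ M}, x ^ 2 ∂ν ≤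
        (∫ x in {y : ℝ | |y| ≤ M / 2}, x ^ 2 ∂ν)
          + M ^ 2 * (ν {x : ℝ | M / 2 ≤ |x|}).toReal := by
    intro M hM
    set s := {y : ℝ | |y| ≤ M / 2}
    set t := {y : ℝ | M / 2 < |y| ∧ |y| ≤ M}
    have hts : MeasurableSet t :=
      (measurableSet_lt measurable_const continuous_abs.measurable).inter
        (measurableSet_le continuous_abs.measurable measurable_const)
    have hunion : {y : ℝ | |y| ≤ M} = s ∪ t := by
      ext y
      simp only [Set.mem_setOf_eq, Set.mem_union, s, t]
      constructor
      · intro hy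
        rcases le_or_gt (|y|) (M / 2) with h | h
        · exact Or.inl h
        · exact Or.inr ⟨h, hy⟩
      · rintro (h | ⟨_, h⟩)
        · exact le_trans h (by linarith)
        · exact h
    have hdisj : Disjoint s t := by
      rw [Set.disjoint_iff]
      rintro y ⟨hy1, hy2, _⟩
      exact absurd hy1 (not_le.2 hy2)
    have hints : IntegrableOn (fun x : ℝ => x ^ 2) s ν :=
      hint s (M / 2) (hmeasset _) (fun y hy => hy)
    have hintt : IntegrableOn (fun x : ℝ => x ^ 2) t ν :=
      hint t M hts (fun y hy => hy.2)
    rw [hunion, setIntegral_union hdisj hts hints hintt]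
    gcongr
    calc ∫ x in t, x ^ 2 ∂ν ≤ ∫ _ in t, M ^ 2 ∂ν := by
          refine setIntegral_mono_on hintt
            integrableOn_const hts ?_
          intro x hx
          have := hx.2
          nlinarith [abs_nonneg x, sq_abs x]
      _ = (ν t).toReal * M ^ 2 := by rw [setIntegral_const]; rfl
      _ ≤ (ν {x : ℝ | M / 2 ≤ |x|}).toReal * M ^ 2 := by
          apply mul_le_mul_of_nonneg_right _ (by positivity)
          apply ENNReal.toReal_mono (measure_ne_top _ _)
          exact measure_mono (fun y hy => hy.1.le)
      _ = M ^ 2 * (ν {x : ℝ | M / 2 ≤ |x|}).toReal := mul_comm _ _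
  -- base case bound
  have haux : ∀ M : ℝ, 0 < M → M ≤ 2 * T →
      ∫ x in {y : ℝ | |y| ≤ M}, x ^ 2 ∂ν ≤ 4 * T ^ 2 + B * M ^ (2 - α) := by
    intro M hM hM2T
    have h1 : ∫ x in {y : ℝ | |y| ≤ M}, x ^ 2 ∂ν ≤ (2 * T) ^ 2 :=
      hcrude M (2 * T) (by positivity) hM2T
    have h2 : 0 ≤ B * M ^ (2 - α) := by positivity
    nlinarith
  -- induction
  have main : ∀ n : ℕ, ∀ M : ℝ, 0 < M → M ≤ T * 2 ^ n →
      ∫ x in {y : ℝ | |y| ≤ M}, x ^ 2 ∂ν ≤ 4 * T ^ 2 + B * M ^ (2 - α) := by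
    intro n
    induction n with
    | zero => intro M hM hMT; exact haux M hM (by simpa using by linarith [hMT] : M ≤ 2 * T)
    | succ n ih =>
      intro M hM hMT
      by_cases hcase : M ≤ 2 * T
      · exact haux M hM hcase
      push_neg at hcase
      have hM2 : 0 < M / 2 := by linarith
      have hTM2 : T ≤ M / 2 := by linarith
      have hM2n : M / 2 ≤ T * 2 ^ n := by
        rw [pow_succ] at hMT
        linarith
      have h20 : (0 : ℝ) ≤ 2 := by norm_num
      have h2r : (2 : ℝ) ^ (α - 2) = ((2 : ℝ) ^ (2 - α))⁻¹ := by
        rw [← Real.rpow_neg h20, neg_sub]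
      have e1 : (M / 2) ^ (2 - α) = M ^ (2 - α) * r := by
        rw [hr, h2r, Real.div_rpow hM.le h20, div_eq_mul_inv]
      have ecast : ((2 : ℕ) : ℝ) + -α = 2 - α := by push_cast; ring
      have e2 : M ^ 2 * (M / 2) ^ (-α) = M ^ (2 - α) * (2 : ℝ) ^ α := by
        rw [Real.div_rpow hM.le h20, ← Real.rpow_natCast M 2, div_eq_mul_inv,
          ← Real.rpow_neg h20, neg_neg, ← mul_assoc, ← Real.rpow_add hM, ecast]
      have hBr : B * r + 2 * c * (2 : ℝ) ^ α = B := by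
        have : B * (1 - r) = 2 * c * (2 : ℝ) ^ α := by
          rw [hB, div_mul_cancel₀]
          linarith
        linarith [this]
      calc ∫ x in {y : ℝ | |y| ≤ M}, x ^ 2 ∂ν
          ≤ (∫ x in {y : ℝ | |y| ≤ M / 2}, x ^ 2 ∂ν)
            + M ^ 2 * (ν {x : ℝ | M / 2 ≤ |x|}).toReal := hsplit M hM
        _ ≤ (4 * T ^ 2 + B * (M / 2) ^ (2 - α)) + M ^ 2 * (2 * c * (M / 2) ^ (-α)) := by
            gcongr
            · exact ih (M / 2) hM2 hM2n
            · exact htail (M / 2) hTM2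
        _ = 4 * T ^ 2 + (B * r + 2 * c * (2 : ℝ) ^ α) * M ^ (2 - α) := by
            rw [e1]
            have : M ^ 2 * (2 * c * (M / 2) ^ (-α)) = 2 * c * (M ^ 2 * (M / 2) ^ (-α)) := by ring
            rw [this, e2]
            ring
        _ = 4 * T ^ 2 + B * M ^ (2 - α) := by rw [hBr]
  intro M hM
  obtain ⟨n, hn⟩ := pow_unbounded_of_one_lt M (one_lt_two (α := ℝ))
  exact main n M hM (le_trans hn.le (le_mul_of_one_le_left (by positivity) hT))



lemma stmt5_two_series {Ω : Type*} [m0 : MeasurableSpace Ω] (P : Measure Ω) [IsProbabilityMeasure P]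
    (η : ℕ → Ω → ℝ) (hmeas : ∀ k, Measurable (η k))
    (hbdd : ∀ k ω, |η k ω| ≤ 1)
    (hindep : iIndepFun η P)
    (hmean : ∀ k, ∫ ω, η k ω ∂P = 0)
    {C : ℝ} (hC : ∀ n : ℕ, ∑ k ∈ Finset.range n, variance (η k) P ≤ C) :
    ∀ᵐ ω ∂P, ∃ L : ℝ, Tendsto (fun n => ∑ k ∈ Finset.range n, η k ω) atTop (𝓝 L) := by
  have hsm : ∀ k, StronglyMeasurable (η k) := fun k => (hmeas k).stronglyMeasurable
  set ℱ := Filtration.natural η hsm with hℱ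
  set M : ℕ → Ω → ℝ := fun n ω => ∑ k ∈ Finset.range (n + 1), η k ω with hM
  have hmemtop : ∀ k, MemLp (η k) ⊤ P := fun k =>
    memLp_top_of_bound (hsm k).aestronglyMeasurable 1
      (Filter.Eventually.of_forall fun ω => by simpa [Real.norm_eq_abs] using hbdd k ω)
  have hint : ∀ k, Integrable (η k) P := fun k => (hmemtop k).integrable le_top
  have hmem2 : ∀ k, MemLp (η k) 2 P := fun k => (hmemtop k).mono_exponent le_top
  have hMint : ∀ n, Integrable (M n) P := fun n => integrable_finset_sum _ fun k _ => hint k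
  have hMsm : ∀ n, StronglyMeasurable[ℱ n] (M n) := by
    intro n
    refine Finset.stronglyMeasurable_fun_sum _ fun k hk => ?_
    exact (Filtration.stronglyAdapted_natural hsm k).mono
      (ℱ.mono (Nat.lt_succ_iff.1 (Finset.mem_range.1 hk)))
  have hadp : StronglyAdapted ℱ M := fun n => hMsm n
  have hmart : Martingale M ℱ P := by
    refine martingale_nat hadp hMint fun i => ?_
    have h1 : M (i + 1) = M i + η (i + 1) := by
      funext ω
      simp [hM, Finset.sum_range_succ]
    have h2 : P[M (i + 1)|ℱ i] =ᵐ[P] P[M i|ℱ i] + P[η (i + 1)|ℱ i] := by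
      rw [h1]; exact condExp_add (hMint i) (hint (i + 1)) _
    have h3 : P[M i|ℱ i] = M i := condExp_of_stronglyMeasurable (ℱ.le i) (hMsm i) (hMint i)
    have h4 : P[η (i + 1)|ℱ i] =ᵐ[P] fun _ => ∫ ω, η (i + 1) ω ∂P :=
      hindep.condExp_natural_ae_eq_of_lt hsm (lt_add_one i)
    filter_upwards [h2, h4] with ω hω2 hω4
    rw [hω2, Pi.add_apply, h3, hω4, hmean (i + 1), add_zero]
  -- variance bound
  have hEM : ∀ n, ∫ ω, M n ω ∂P = 0 := by
    intro n
    rw [hM]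
    rw [integral_finset_sum _ fun k _ => hint k]
    simp [hmean]
  have heqM : ∀ n : ℕ, M n = ∑ i ∈ Finset.range (n + 1), η i := fun n =>
    funext fun ω => (Finset.sum_apply _ _ _).symm
  have hMmem2 : ∀ n, MemLp (M n) 2 P := fun n => by
    rw [heqM n]; exact memLp_finset_sum' _ fun k _ => hmem2 k
  have hvarM : ∀ n, variance (M n) P ≤ C := by
    intro n
    have : variance (M n) P = ∑ k ∈ Finset.range (n + 1), variance (η k) P := by
      rw [heqM n]
      exact IndepFun.variance_sum (μ := P) (X := η) (s := Finset.range (n + 1))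
        (fun k _ => hmem2 k) (fun i _ j _ hij => hindep.indepFun hij)
    rw [this]; exact hC (n + 1)
  have hMsq_int : ∀ n, Integrable (fun ω => (M n ω) ^ 2) P := fun n =>
    (hMmem2 n).integrable_sq
  have hM2 : ∀ n, ∫ ω, (M n ω) ^ 2 ∂P ≤ C := by
    intro n
    have hv := variance_eq_sub (hMmem2 n)
    have : (∫ ω, (M n ω) ^ 2 ∂P) = variance (M n) P + (∫ ω, M n ω ∂P) ^ 2 := by
      simp only [Pi.pow_apply] at hv
      linarith [hv]
    rw [this, hEM n]
    simpa using hvarM n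
  have hC0 : 0 ≤ C := le_trans (by simp) (hC 0)
  have hL1 : ∀ n, eLpNorm (M n) 1 P ≤ ((1 + C).toNNReal : ℝ≥0∞) := by
    intro n
    have h0 : eLpNorm (M n) 1 P = ENNReal.ofReal (∫ ω, ‖M n ω‖ ∂P) := by
      rw [eLpNorm_one_eq_lintegral_enorm, ← ofReal_integral_norm_eq_lintegral_enorm (hMint n)]
    rw [h0]
    have hcoe : ((1 + C).toNNReal : ℝ≥0∞) = ENNReal.ofReal (1 + C) := rfl
    rw [hcoe]
    · apply ENNReal.ofReal_le_ofReal
      have hptwise : ∀ ω, ‖M n ω‖ ≤ 1 + (M n ω) ^ 2 := by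
        intro ω
        rw [Real.norm_eq_abs]
        nlinarith [sq_abs (M n ω), abs_nonneg (M n ω), sq_nonneg (|M n ω| - 1)]
      calc ∫ ω, ‖M n ω‖ ∂P ≤ ∫ ω, (1 + (M n ω) ^ 2) ∂P :=
            integral_mono (hMint n).norm ((integrable_const 1).add (hMsq_int n)) hptwise
        _ = 1 + ∫ ω, (M n ω) ^ 2 ∂P := by
            rw [integral_add (integrable_const 1) (hMsq_int n)]
            simp
        _ ≤ 1 + C := by linarith [hM2 n]
  have hconv := hmart.submartingale.exists_ae_tendsto_of_bdd hL1
  filter_upwards [hconv] with ω hω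
  obtain ⟨L, hL⟩ := hω
  refine ⟨L, ?_⟩
  have : Tendsto (fun n => ∑ k ∈ Finset.range (n + 1), η k ω) atTop (𝓝 L) := hL
  exact (tendsto_add_atTop_iff_nat 1).1 this



lemma stmt5_integral_odd (ν : Measure ℝ) [IsProbabilityMeasure ν]
    (hsymm : Measure.map (fun x : ℝ => -x) ν = ν) {f : ℝ → ℝ} (hf : Measurable f)
    (hodd : ∀ x, f (-x) = -f x) (hintf : Integrable f ν) : ∫ x, f x ∂ν = 0 := by
  have h1 : ∫ x, f x ∂ν = ∫ x, f (-x) ∂ν := by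
    conv_lhs => rw [← hsymm]
    rw [integral_map measurable_neg.aemeasurable]
    rw [hsymm]
    exact hf.aestronglyMeasurable
  have h2 : ∫ x, f (-x) ∂ν = -∫ x, f x ∂ν := by
    simp_rw [hodd]
    exact integral_neg f
  linarith [h1, h2]

lemma stmt5_trunc_meas (u : ℝ) : Measurable (fun x : ℝ => if |u * x| ≤ 1 then u * x else 0) :=
  Measurable.ite (measurableSet_le ((measurable_id.const_mul u).abs) measurable_const)
    (measurable_id.const_mul u) measurable_const

lemma stmt5_trunc_sq (ν : Measure ℝ) [IsProbabilityMeasure ν] {u : ℝ} (hu : u ≠ 0) :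
    ∫ x, (if |u * x| ≤ 1 then u * x else 0) ^ 2 ∂ν
      = u ^ 2 * ∫ x in {y : ℝ | |y| ≤ 1 / |u|}, x ^ 2 ∂ν := by
  have hu0 : 0 < |u| := abs_pos.2 hu
  have hiff : ∀ x : ℝ, |u * x| ≤ 1 ↔ |x| ≤ 1 / |u| := by
    intro x
    rw [abs_mul, le_div_iff₀ hu0, mul_comm]
  have hptwise : (fun x => (if |u * x| ≤ 1 then u * x else 0) ^ 2)
      = Set.indicator {y : ℝ | |y| ≤ 1 / |u|} (fun x => u ^ 2 * x ^ 2) := by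
    funext x
    by_cases hx : |x| ≤ 1 / |u|
    · have hx' : x ∈ {y : ℝ | |y| ≤ 1 / |u|} := hx
      rw [Set.indicator_of_mem hx', if_pos ((hiff x).2 hx), mul_pow]
    · have hx' : x ∉ {y : ℝ | |y| ≤ 1 / |u|} := hx
      rw [Set.indicator_of_notMem hx', if_neg (fun h => hx ((hiff x).1 h))]
      ring
  rw [hptwise, integral_indicator (measurableSet_le continuous_abs.measurable measurable_const),
    integral_const_mul]


/-- Lemma 1: a.s. convergence criterion. For i.i.d. symmetric random
variables with regularly varying tails `t^α P(|ξ| ≥ t) → c ∈ (0, ∞)`, the series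
`∑_k u_k ξ_k` converges almost surely if and only if `∑_k |u_k|^α < ∞`. -/
theorem statement5
    (α : ℝ) (hα : α ∈ Set.Ioo (0 : ℝ) 2)
    {Ω : Type*} [MeasurableSpace Ω] (P : Measure Ω) [IsProbabilityMeasure P]
    (ξ : ℕ → Ω → ℝ) (ν : Measure ℝ)
    (hmeas : ∀ k, Measurable (ξ k))
    (hindep : iIndepFun ξ P)
    (hdist : ∀ k, Measure.map (ξ k) P = ν)
    (hsymm : Measure.map (fun x : ℝ => -x) ν = ν)
    (c : ℝ) (hc : 0 < c)
    (htail : Tendsto (fun t : ℝ => t ^ α * (ν {x : ℝ | t ≤ |x|}).toReal) atTop (𝓝 c))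
    (u : ℕ → ℝ) :
    (∀ᵐ ω ∂P, ∃ L : ℝ,
        Tendsto (fun n => ∑ k ∈ Finset.range n, u k * ξ k ω) atTop (𝓝 L)) ↔
    Summable (fun k => |u k| ^ α) := by

  obtain ⟨hα0, hα2⟩ := hα
  have hνprob : IsProbabilityMeasure ν := by
    rw [← hdist 0]; exact Measure.isProbabilityMeasure_map (hmeas 0).aemeasurable
  -- tail bounds
  have hev : ∀ᶠ t : ℝ in atTop, c / 2 < t ^ α * (ν {x : ℝ | t ≤ |x|}).toReal ∧
      t ^ α * (ν {x : ℝ | t ≤ |x|}).toReal < 2 * c := by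
    have h1 := htail.eventually (eventually_gt_nhds (by linarith : c / 2 < c))
    have h2 := htail.eventually (eventually_lt_nhds (by linarith : c < 2 * c))
    filter_upwards [h1, h2] with t ht1 ht2
    exact ⟨ht1, ht2⟩
  obtain ⟨T₀, hT₀⟩ := eventually_atTop.1 hev
  set T : ℝ := max T₀ 1 with hTdef
  have hT1 : (1 : ℝ) ≤ T := le_max_right _ _
  have hT0 : (0 : ℝ) < T := lt_of_lt_of_le one_pos hT1
  have htail_lb : ∀ t : ℝ, T ≤ t → c / 2 * t ^ (-α) ≤ (ν {x : ℝ | t ≤ |x|}).toReal := by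
    intro t ht
    have ht0 : 0 < t := lt_of_lt_of_le hT0 ht
    have h := (hT₀ t (le_trans (le_max_left _ _) ht)).1
    have htα : 0 < t ^ α := Real.rpow_pos_of_pos ht0 α
    rw [Real.rpow_neg ht0.le, ← div_eq_mul_inv, div_le_iff₀ htα]
    nlinarith [h]
  have htail_ub : ∀ t : ℝ, T ≤ t → (ν {x : ℝ | t ≤ |x|}).toReal ≤ 2 * c * t ^ (-α) := by
    intro t ht
    have ht0 : 0 < t := lt_of_lt_of_le hT0 ht
    have h := (hT₀ t (le_trans (le_max_left _ _) ht)).2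
    have htα : 0 < t ^ α := Real.rpow_pos_of_pos ht0 α
    rw [Real.rpow_neg ht0.le, mul_comm (2 * c), ← div_eq_inv_mul, le_div_iff₀ htα]
    nlinarith [h]
  have hPν : ∀ (k : ℕ) (B : Set ℝ), MeasurableSet B → P (ξ k ⁻¹' B) = ν B := by
    intro k B hB
    rw [← hdist k, Measure.map_apply (hmeas k) hB]
  set Bs : ℕ → Set ℝ := fun k => {x : ℝ | 1 ≤ |u k * x|} with hBdef
  have hBmeas : ∀ k, MeasurableSet (Bs k) :=
    fun k => measurableSet_le measurable_const ((measurable_id.const_mul (u k)).abs)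
  have hBeq : ∀ k, u k ≠ 0 → Bs k = {x : ℝ | 1 / |u k| ≤ |x|} := by
    intro k hk
    ext x
    simp only [hBdef, Set.mem_setOf_eq, abs_mul]
    rw [div_le_iff₀ (abs_pos.2 hk), mul_comm]
  set s : ℕ → Set Ω := fun k => ξ k ⁻¹' Bs k with hsdef
  have hsmeas : ∀ k, MeasurableSet (s k) := fun k => (hmeas k) (hBmeas k)
  have hPs : ∀ k, P (s k) = ν (Bs k) := fun k => hPν k _ (hBmeas k)
  have hinvpow : ∀ v : ℝ, v ≠ 0 → (1 / |v|) ^ (-α) = |v| ^ α := by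
    intro v hv
    have h0 : (0 : ℝ) ≤ |v| := abs_nonneg v
    rw [one_div, Real.inv_rpow h0, Real.rpow_neg h0, inv_inv]
  constructor
  · -- convergence implies summable
    intro hconv
    have hindepset : iIndepSet s P :=
      (iIndepSet_iff_meas_biInter hsmeas).2 fun S =>
        hindep.measure_inter_preimage_eq_mul S fun i _ => hBmeas i
    have hnotmem : ∀ᵐ ω ∂P, ω ∉ limsup s atTop := by
      filter_upwards [hconv] with ω hω
      obtain ⟨L, hL⟩ := hω
      have hterm : Tendsto (fun k => u k * ξ k ω) atTop (𝓝 0) := stmt5_terms_tendsto_zero hL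
      have habs : Tendsto (fun k => |u k * ξ k ω|) atTop (𝓝 0) := by
        simpa using hterm.abs
      have hsmall : ∀ᶠ k in atTop, |u k * ξ k ω| < 1 :=
        habs.eventually (eventually_lt_nhds one_pos)
      intro hmem
      rw [mem_limsup_iff_frequently_mem] at hmem
      obtain ⟨k, hk1, hk2⟩ := (hsmall.and_frequently hmem).exists
      exact absurd hk2 (not_le.2 hk1)
    have hlimsup0 : P (limsup s atTop) = 0 := measure_eq_zero_iff_ae_notMem.2 hnotmem
    have hsum_ne_top : ∑' k, P (s k) ≠ ∞ := by
      intro h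
      have := ProbabilityTheory.measure_limsup_eq_one hsmeas hindepset h
      rw [hlimsup0] at this
      exact zero_ne_one this
    have hsummable : Summable fun k => (P (s k)).toReal := ENNReal.summable_toReal hsum_ne_top
    set δ : ℝ := c / 2 * T ^ (-α) with hδ
    have hδ0 : 0 < δ := by
      have : (0 : ℝ) < T ^ (-α) := Real.rpow_pos_of_pos hT0 _
      positivity
    have hsmall : ∀ᶠ k in atTop, (P (s k)).toReal < δ :=
      hsummable.tendsto_atTop_zero.eventually (eventually_lt_nhds hδ0)
    have hukle : ∀ k, (P (s k)).toReal < δ → |u k| ≤ 1 / T := by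
      intro k hk
      by_contra hgt
      push_neg at hgt
      have huk0 : u k ≠ 0 := by
        intro h
        rw [h] at hgt
        simp only [abs_zero] at hgt
        have : (0 : ℝ) < 1 / T := by positivity
        linarith
      have hsub : {x : ℝ | T ≤ |x|} ⊆ Bs k := by
        intro x hx
        have hx' : T ≤ |x| := hx
        have h1 : (1 : ℝ) = 1 / T * T := by field_simp
        have h2 : 1 / T * T ≤ |u k| * |x| :=
          mul_le_mul hgt.le hx' hT0.le (abs_nonneg _)
        show (1 : ℝ) ≤ |u k * x|
        rw [abs_mul]
        linarith
      have hge : δ ≤ (P (s k)).toReal := by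
        rw [hPs k]
        calc δ ≤ (ν {x : ℝ | T ≤ |x|}).toReal := htail_lb T le_rfl
          _ ≤ (ν (Bs k)).toReal :=
            ENNReal.toReal_mono (measure_ne_top _ _) (measure_mono hsub)
      linarith
    refine stmt5_summable_of_eventually_le
      (fun k => Real.rpow_nonneg (abs_nonneg _) α) ?_ (hsummable.mul_left (2 / c))
    filter_upwards [hsmall] with k hk
    by_cases huk : u k = 0
    · rw [huk]
      simp only [abs_zero, Real.zero_rpow (ne_of_gt hα0)]
      have : 0 ≤ (P (s k)).toReal := ENNReal.toReal_nonneg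
      positivity
    · have hule : |u k| ≤ 1 / T := hukle k hk
      have hu0 : 0 < |u k| := abs_pos.2 huk
      have hTle : T ≤ 1 / |u k| := by
        rw [le_div_iff₀ hu0]
        calc T * |u k| ≤ T * (1 / T) := by
              apply mul_le_mul_of_nonneg_left hule hT0.le
          _ = 1 := by field_simp
      have hlb := htail_lb (1 / |u k|) hTle
      rw [hinvpow (u k) huk] at hlb
      rw [hPs k, hBeq k huk]
      have hmul := mul_le_mul_of_nonneg_left hlb (by positivity : (0:ℝ) ≤ 2 / c)
      have hid : 2 / c * (c / 2 * |u k| ^ α) = |u k| ^ α := by field_simp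
      linarith
  · -- summable implies convergence
    intro hsum
    set φ : ℕ → ℝ → ℝ := fun k x => if |u k * x| ≤ 1 then u k * x else 0 with hφdef
    have hφm : ∀ k, Measurable (φ k) := fun k => stmt5_trunc_meas (u k)
    set η : ℕ → Ω → ℝ := fun k ω => φ k (ξ k ω) with hηdef
    have hηmeas : ∀ k, Measurable (η k) := fun k => (hφm k).comp (hmeas k)
    have hφbdd : ∀ k x, |φ k x| ≤ 1 := by
      intro k x
      by_cases h : |u k * x| ≤ 1
      · simp only [hφdef, if_pos h]; exact h
      · simp only [hφdef, if_neg h]; simp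
    have hηindep : iIndepFun η P := hindep.comp φ hφm
    have hφint : ∀ k, Integrable (φ k) ν := by
      intro k
      refine (memLp_top_of_bound (hφm k).aestronglyMeasurable 1
        (Filter.Eventually.of_forall fun x => ?_)).integrable le_top
      simpa [Real.norm_eq_abs] using hφbdd k x
    have hmean : ∀ k, ∫ ω, η k ω ∂P = 0 := by
      intro k
      have h1 : ∫ ω, η k ω ∂P = ∫ x, φ k x ∂ν := by
        rw [← hdist k, integral_map (hmeas k).aemeasurable (hφm k).aestronglyMeasurable]
      rw [h1]
      refine stmt5_integral_odd ν hsymm (hφm k) ?_ (hφint k)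
      intro x
      simp only [hφdef, mul_neg, abs_neg]
      split_ifs <;> simp
    -- variance estimate
    obtain ⟨B₀, hB₀, hmom⟩ := stmt5_moment_bound ν hT1 hα0 hα2 hc htail_ub
    set K : ℝ := 4 * T ^ 2 + B₀ with hK
    have hK0 : 0 ≤ K := by positivity
    have hu_small : ∀ᶠ k in atTop, |u k| ≤ 1 / T := by
      have h0 : Tendsto (fun k => |u k| ^ α) atTop (𝓝 0) := hsum.tendsto_atTop_zero
      have hδ : (0 : ℝ) < (1 / T) ^ α := Real.rpow_pos_of_pos (by positivity) α
      filter_upwards [h0.eventually (eventually_lt_nhds hδ)] with k hk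
      by_contra hgt
      push_neg at hgt
      have := Real.rpow_le_rpow (by positivity) hgt.le hα0.le
      linarith
    have hmem2η : ∀ k, MemLp (η k) 2 P := by
      intro k
      refine (memLp_top_of_bound (hηmeas k).stronglyMeasurable.aestronglyMeasurable 1
        (Filter.Eventually.of_forall fun ω => ?_)).mono_exponent le_top
      simpa [Real.norm_eq_abs] using hφbdd k (ξ k ω)
    have hvar_ev : ∀ᶠ k in atTop, variance (η k) P ≤ K * |u k| ^ α := by
      filter_upwards [hu_small] with k hk
      by_cases huk : u k = 0
      · have : η k = fun _ => 0 := by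
          funext ω
          simp [hηdef, hφdef, huk]
        rw [this]
        have : variance (fun _ : Ω => (0 : ℝ)) P = 0 := by
          have := variance_zero (Ω := Ω) P
          simpa [Pi.zero_def] using this
        rw [this]
        positivity
      · have hu0 : 0 < |u k| := abs_pos.2 huk
        have hu1 : |u k| ≤ 1 := le_trans hk (by
          rw [div_le_one hT0]; exact hT1)
        have hvar_le : variance (η k) P ≤ ∫ ω, (η k ω) ^ 2 ∂P := by
          have hv := variance_eq_sub (hmem2η k)
          simp only [Pi.pow_apply] at hv
          nlinarith [sq_nonneg (∫ ω, η k ω ∂P)]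
        have hEsq : ∫ ω, (η k ω) ^ 2 ∂P = ∫ x, (φ k x) ^ 2 ∂ν := by
          rw [← hdist k, integral_map (hmeas k).aemeasurable
            (((hφm k).pow_const 2).aestronglyMeasurable)]
        have htr := stmt5_trunc_sq ν (u := u k) huk
        have hM0 : (0 : ℝ) < 1 / |u k| := by positivity
        have hI := hmom (1 / |u k|) hM0
        -- rpow arithmetic
        have hpow1 : (1 / |u k|) ^ (2 - α) = (|u k| ^ (2 - α))⁻¹ := by
          rw [one_div, Real.inv_rpow (abs_nonneg _)]
        have hpow2 : u k ^ 2 * (|u k| ^ (2 - α))⁻¹ = |u k| ^ α := by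
          rw [← sq_abs, ← Real.rpow_natCast |u k| 2, ← Real.rpow_neg (abs_nonneg _),
            ← Real.rpow_add hu0]
          norm_num
        have hpow3 : u k ^ 2 ≤ |u k| ^ α := by
          rw [← sq_abs, ← Real.rpow_natCast |u k| 2]
          have := Real.rpow_le_rpow_of_exponent_ge hu0 hu1 hα2.le
          simpa using this
        calc variance (η k) P ≤ ∫ ω, (η k ω) ^ 2 ∂P := hvar_le
          _ = u k ^ 2 * ∫ x in {y : ℝ | |y| ≤ 1 / |u k|}, x ^ 2 ∂ν := by
              rw [hEsq]
              exact htr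
          _ ≤ u k ^ 2 * (4 * T ^ 2 + B₀ * (1 / |u k|) ^ (2 - α)) := by
              apply mul_le_mul_of_nonneg_left hI (sq_nonneg _)
          _ = 4 * T ^ 2 * u k ^ 2 + B₀ * (u k ^ 2 * (|u k| ^ (2 - α))⁻¹) := by
              rw [hpow1]; ring
          _ ≤ 4 * T ^ 2 * |u k| ^ α + B₀ * |u k| ^ α := by
              rw [hpow2]
              have h4T : (0 : ℝ) ≤ 4 * T ^ 2 := by positivity
              nlinarith [hpow3]
          _ = K * |u k| ^ α := by rw [hK]; ring
    have hvar_sum : Summable fun k => variance (η k) P :=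
      stmt5_summable_of_eventually_le (fun k => variance_nonneg _ _) hvar_ev
        (hsum.mul_left K)
    have hCsum : ∀ n : ℕ, ∑ k ∈ Finset.range n, variance (η k) P
        ≤ ∑' k, variance (η k) P :=
      fun n => Summable.sum_le_tsum _ (fun k _ => variance_nonneg _ _) hvar_sum
    have hconvη := stmt5_two_series P η hηmeas (fun k ω => hφbdd k (ξ k ω))
      hηindep hmean hCsum
    -- Borel-Cantelli I
    have hev_bound : ∀ᶠ k in atTop, P (s k) ≤ ENNReal.ofReal (2 * c * |u k| ^ α) := by
      filter_upwards [hu_small] with k hk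
      by_cases huk : u k = 0
      · have : Bs k = ∅ := by
          ext x
          simp [hBdef, huk]
        rw [hPs k, this]
        simp
      · have hu0 : 0 < |u k| := abs_pos.2 huk
        have hTle : T ≤ 1 / |u k| := by
          rw [le_div_iff₀ hu0]
          calc T * |u k| ≤ T * (1 / T) := mul_le_mul_of_nonneg_left hk hT0.le
            _ = 1 := by field_simp
        have hub := htail_ub (1 / |u k|) hTle
        rw [hinvpow (u k) huk] at hub
        rw [hPs k, hBeq k huk]
        refine (ENNReal.le_ofReal_iff_toReal_le (measure_ne_top _ _) ?_).2 hub
        positivity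
    have hsum_ne_top : ∑' k, P (s k) ≠ ∞ :=
      stmt5_tsum_ne_top (fun k => by positivity) (hsum.mul_left (2 * c)) hev_bound
    have hae_ev : ∀ᵐ ω ∂P, ∀ᶠ k in atTop, ω ∉ s k := ae_eventually_notMem hsum_ne_top
    filter_upwards [hconvη, hae_ev] with ω hω1 hω2
    obtain ⟨L, hL⟩ := hω1
    obtain ⟨N, hN⟩ := eventually_atTop.1 hω2
    refine stmt5_sum_transfer N (fun k hk => ?_) hL
    have hns : ω ∉ s k := hN k hk
    have : ¬(1 : ℝ) ≤ |u k * ξ k ω| := hns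
    simp only [hηdef, hφdef]
    rw [if_pos (le_of_lt (not_le.1 this))]

end
end

section
/- Let α ∈ (0,2] and let λ : ℝ → ℂ be the characteristic function of a real random variable, satisfying λ(θ) = 1 − |θ|^α + o(|θ|^α) as θ → 0. Let (u^{(j)})_{j∈ℕ} be elements of ℓ^α(ℕ) with sup_j ‖u^{(j)}‖_{ℓ^α} < ∞ and ‖u^{(j)}‖_{ℓ^∞} → 0 as j → ∞. Then for every θ ∈ ℝ, ∑_{k∈ℕ} |λ(u_k^{(j)} θ) − exp(−|u_k^{(j)} θ|^α)| → 0 as j → ∞; consequently ∏_{k∈ℕ} λ(u_k^{(j)} θ) − ∏_{k∈ℕ} exp(−|u_k^{(j)} θ|^α) → 0 as j → ∞. -/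
open MeasureTheory ProbabilityTheory Filter Finset Topology ENNReal NNReal

noncomputable section

/-- Telescoping bound: if all factors have norm at most 1, the difference of finite
products is bounded by the sum of the differences. -/
lemma tele_aux (a b : ℕ → ℂ) (ha : ∀ k, ‖a k‖ ≤ 1) (hb : ∀ k, ‖b k‖ ≤ 1) :
    ∀ s : Finset ℕ, ‖(∏ k ∈ s, a k) - ∏ k ∈ s, b k‖ ≤ ∑ k ∈ s, ‖a k - b k‖ := by
  intro s
  induction s using Finset.induction_on with
  | empty => simp
  | insert _ _ hx ih =>
    rename_i x s
    rw [Finset.prod_insert hx, Finset.prod_insert hx, Finset.sum_insert hx]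
    have hsplit : a x * ∏ k ∈ s, a k - b x * ∏ k ∈ s, b k
        = a x * ((∏ k ∈ s, a k) - ∏ k ∈ s, b k) + (a x - b x) * ∏ k ∈ s, b k := by ring
    rw [hsplit]
    have h1 : ‖a x * ((∏ k ∈ s, a k) - ∏ k ∈ s, b k)‖ ≤ ∑ k ∈ s, ‖a k - b k‖ := by
      rw [norm_mul]
      calc ‖a x‖ * ‖(∏ k ∈ s, a k) - ∏ k ∈ s, b k‖
          ≤ 1 * ‖(∏ k ∈ s, a k) - ∏ k ∈ s, b k‖ :=
            mul_le_mul_of_nonneg_right (ha x) (norm_nonneg _)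
        _ = ‖(∏ k ∈ s, a k) - ∏ k ∈ s, b k‖ := one_mul _
        _ ≤ _ := ih
    have hprodb : ‖∏ k ∈ s, b k‖ ≤ 1 :=
      le_trans (norm_prod_le _ _)
        (Finset.prod_le_one (fun k _ => norm_nonneg _) (fun k _ => hb k))
    have h2 : ‖(a x - b x) * ∏ k ∈ s, b k‖ ≤ ‖a x - b x‖ := by
      rw [norm_mul]
      calc ‖a x - b x‖ * ‖∏ k ∈ s, b k‖ ≤ ‖a x - b x‖ * 1 :=
            mul_le_mul_of_nonneg_left hprodb (norm_nonneg _)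
        _ = ‖a x - b x‖ := mul_one _
    calc ‖a x * ((∏ k ∈ s, a k) - ∏ k ∈ s, b k) + (a x - b x) * ∏ k ∈ s, b k‖
        ≤ ‖a x * ((∏ k ∈ s, a k) - ∏ k ∈ s, b k)‖ + ‖(a x - b x) * ∏ k ∈ s, b k‖ :=
          norm_add_le _ _
      _ ≤ ‖a x - b x‖ + ∑ k ∈ s, ‖a k - b k‖ := by linarith

/-- comparison of characteristic function products. If `λ` is a
characteristic function with `λ(θ) = 1 - |θ|^α + o(|θ|^α)` at `0`, and `(u^{(j)}) ⊂ ℓ^α`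
with uniformly bounded `ℓ^α`-norms and `‖u^{(j)}‖_{ℓ^∞} → 0`, then for each `θ`,
`∑_k |λ(u^{(j)}_k θ) - exp(-|u^{(j)}_k θ|^α)| → 0`, and consequently the corresponding
infinite products (which exist) differ by `o(1)` as `j → ∞`. -/
theorem statement9
    (α : ℝ) (hα : α ∈ Set.Ioc (0 : ℝ) 2)
    (ν : Measure ℝ) [IsProbabilityMeasure ν]
    (lam : ℝ → ℂ) (hlam : lam = charFn ν)
    (hexp : (fun θ : ℝ => lam θ - 1 + ((|θ| ^ α : ℝ) : ℂ))
      =o[𝓝 (0 : ℝ)] fun θ : ℝ => |θ| ^ α)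
    (u : ℕ → ℕ → ℝ)  -- `u j k` is `u^{(j)}_k`
    (hu : ∀ j, Summable fun k => |u j k| ^ α)
    (hbdd : ∃ B : ℝ, ∀ j, (∑' k, |u j k| ^ α) ^ (1 / α) ≤ B)
    (hsup : ∀ ε > (0 : ℝ), ∀ᶠ j in atTop, ∀ k, |u j k| ≤ ε)
    (θ : ℝ) :
    Tendsto (fun j => ∑' k,
        (‖lam (u j k * θ) - Complex.exp (-((|u j k * θ| ^ α : ℝ) : ℂ))‖₊ : ℝ≥0∞))
      atTop (𝓝 0) ∧
    (∀ j, ∃ L : ℂ,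
        Tendsto (fun n => ∏ k ∈ Finset.range n, lam (u j k * θ)) atTop (𝓝 L)) ∧
    ∀ L E : ℕ → ℂ,
      (∀ j, Tendsto (fun n => ∏ k ∈ Finset.range n, lam (u j k * θ))
        atTop (𝓝 (L j))) →
      (∀ j, Tendsto (fun n => ∏ k ∈ Finset.range n,
          Complex.exp (-((|u j k * θ| ^ α : ℝ) : ℂ))) atTop (𝓝 (E j))) →
      Tendsto (fun j => L j - E j) atTop (𝓝 0) := by
  have hα0 : 0 < α := hα.1
  -- `λ` has modulus at most 1
  have hlam1 : ∀ t : ℝ, ‖lam t‖ ≤ 1 := by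
    intro t
    rw [hlam]
    have hone : ∀ x : ℝ, ‖Complex.exp (Complex.I * t * x)‖ = 1 := by
      intro x
      rw [Complex.norm_exp]
      simp [Complex.mul_re, Complex.mul_im]
    calc ‖∫ x, Complex.exp (Complex.I * t * x) ∂ν‖
        ≤ ∫ x, ‖Complex.exp (Complex.I * t * x)‖ ∂ν :=
          MeasureTheory.norm_integral_le_integral_norm _
      _ = 1 := by simp [hone]
  -- modulus of the exponential factor
  have hexpnorm : ∀ c : ℝ, 0 ≤ c → ‖Complex.exp (-(c:ℂ))‖ ≤ 1 := by
    intro c hc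
    rw [Complex.norm_exp]
    simp only [Complex.neg_re, Complex.ofReal_re]
    exact Real.exp_le_one_iff.2 (by linarith)
  have hexp1 : ∀ c : ℝ, 0 ≤ c → ‖Complex.exp (-(c:ℂ)) - 1‖ ≤ c := by
    intro c hc
    have hre : Complex.exp (-(c:ℂ)) = ((Real.exp (-c) : ℝ) : ℂ) := by
      rw [Complex.ofReal_exp]; push_cast; ring_nf
    rw [hre]
    have : ((Real.exp (-c) : ℝ) : ℂ) - 1 = ((Real.exp (-c) - 1 : ℝ) : ℂ) := by push_cast; ring
    rw [this, Complex.norm_real, Real.norm_eq_abs]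
    have h1 : Real.exp (-c) ≤ 1 := Real.exp_le_one_iff.2 (by linarith)
    have h2 : 1 - c ≤ Real.exp (-c) := by linarith [Real.add_one_le_exp (-c)]
    rw [abs_of_nonpos (by linarith)]
    linarith
  -- little-o expansion of the exponential
  have hexp2 : (fun s : ℝ => Complex.exp (-(s:ℂ)) - 1 + (s:ℂ)) =o[𝓝 (0:ℝ)] fun s => s := by
    rw [Asymptotics.isLittleO_iff]
    intro c hc
    rw [Metric.eventually_nhds_iff]
    refine ⟨min 1 c, lt_min one_pos hc, fun {s} hs => ?_⟩
    rw [Real.dist_eq, sub_zero] at hs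
    have hs1 : |s| ≤ 1 := le_of_lt (lt_of_lt_of_le hs (min_le_left _ _))
    have hsc : |s| ≤ c := le_of_lt (lt_of_lt_of_le hs (min_le_right _ _))
    have habs : ‖(-(s:ℂ))‖ ≤ 1 := by
      rw [norm_neg, Complex.norm_real, Real.norm_eq_abs]; exact hs1
    have h := Complex.norm_exp_sub_one_sub_id_le habs
    have heq : Complex.exp (-(s:ℂ)) - 1 - (-(s:ℂ)) = Complex.exp (-(s:ℂ)) - 1 + (s:ℂ) := by ring
    rw [heq] at h
    have habs2 : ‖(-(s:ℂ))‖ = |s| := by rw [norm_neg, Complex.norm_real, Real.norm_eq_abs]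
    rw [habs2] at h
    calc ‖Complex.exp (-(s:ℂ)) - 1 + (s:ℂ)‖ ≤ |s| ^ 2 := h
      _ ≤ c * |s| := by nlinarith [abs_nonneg s]
      _ = c * ‖s‖ := by rw [Real.norm_eq_abs]
  have htend : Tendsto (fun t : ℝ => |t| ^ α) (𝓝 (0:ℝ)) (𝓝 (0:ℝ)) := by
    have hcont : ContinuousAt (fun x : ℝ => x ^ α) 0 :=
      Real.continuousAt_rpow_const 0 α (Or.inr hα0.le)
    have h2 := hcont.tendsto
    rw [Real.zero_rpow hα0.ne'] at h2
    exact h2.comp (continuous_abs.tendsto' 0 0 abs_zero)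
  have h2o : (fun t : ℝ => Complex.exp (-((|t| ^ α : ℝ) : ℂ)) - 1 + ((|t| ^ α : ℝ) : ℂ))
      =o[𝓝 (0:ℝ)] fun t : ℝ => |t| ^ α := hexp2.comp_tendsto htend
  have hg : (fun t : ℝ => lam t - Complex.exp (-((|t| ^ α : ℝ) : ℂ)))
      =o[𝓝 (0:ℝ)] fun t : ℝ => |t| ^ α := by
    have h3 := hexp.sub h2o
    have heq : (fun t : ℝ => (lam t - 1 + ((|t| ^ α : ℝ) : ℂ))
        - (Complex.exp (-((|t| ^ α : ℝ) : ℂ)) - 1 + ((|t| ^ α : ℝ) : ℂ)))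
        = fun t : ℝ => lam t - Complex.exp (-((|t| ^ α : ℝ) : ℂ)) := by
      funext t; ring
    rwa [heq] at h3
  -- quantitative version of the little-o
  have key : ∀ ε : ℝ, 0 < ε → ∃ δ > (0:ℝ), ∀ t : ℝ, |t| ≤ δ →
      ‖lam t - Complex.exp (-((|t| ^ α : ℝ) : ℂ))‖ ≤ ε * |t| ^ α := by
    intro ε hε
    have h := Asymptotics.isLittleO_iff.1 hg hε
    rw [Metric.eventually_nhds_iff] at h
    obtain ⟨δ, hδ, h⟩ := h
    refine ⟨δ / 2, by positivity, fun t ht => ?_⟩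
    have hd : dist t 0 < δ := by rw [Real.dist_eq, sub_zero]; exact lt_of_le_of_lt ht (by linarith)
    have h2 := h hd
    rwa [Real.norm_eq_abs, abs_of_nonneg (Real.rpow_nonneg (abs_nonneg t) α)] at h2
  -- bound on `λ - 1` near 0
  have hnear1 : ∃ δ > (0:ℝ), ∀ t : ℝ, |t| ≤ δ → ‖lam t - 1‖ ≤ 2 * |t| ^ α := by
    obtain ⟨δ, hδ, hk⟩ := key 1 one_pos
    refine ⟨δ, hδ, fun t ht => ?_⟩
    have hc : (0:ℝ) ≤ |t| ^ α := Real.rpow_nonneg (abs_nonneg t) α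
    have htr : lam t - 1 = (lam t - Complex.exp (-((|t| ^ α : ℝ) : ℂ)))
        + (Complex.exp (-((|t| ^ α : ℝ) : ℂ)) - 1) := by ring
    calc ‖lam t - 1‖ ≤ ‖lam t - Complex.exp (-((|t| ^ α : ℝ) : ℂ))‖
          + ‖Complex.exp (-((|t| ^ α : ℝ) : ℂ)) - 1‖ := by rw [htr]; exact norm_add_le _ _
      _ ≤ 1 * |t| ^ α + |t| ^ α := add_le_add (hk t ht) (hexp1 _ hc)
      _ = 2 * |t| ^ α := by ring
  -- uniform bound on the ℓ^α norms
  have hBB : ∃ B : ℝ, 0 ≤ B ∧ ∀ j, ∑' k, |u j k| ^ α ≤ B := by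
    obtain ⟨B0, hB0⟩ := hbdd
    refine ⟨(max B0 0) ^ α, Real.rpow_nonneg (le_max_right _ _) α, fun j => ?_⟩
    have ht0 : (0:ℝ) ≤ ∑' k, |u j k| ^ α :=
      tsum_nonneg fun k => Real.rpow_nonneg (abs_nonneg _) α
    have h1 : ((∑' k, |u j k| ^ α) ^ (1/α)) ^ α ≤ (max B0 0) ^ α :=
      Real.rpow_le_rpow (Real.rpow_nonneg ht0 _) ((hB0 j).trans (le_max_left _ _)) hα0.le
    rwa [← Real.rpow_mul ht0, one_div_mul_cancel hα0.ne', Real.rpow_one] at h1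
  -- eventual smallness of `|u j k * θ|`
  have hev : ∀ δ > (0:ℝ), ∀ᶠ j in atTop, ∀ k, |u j k * θ| ≤ δ := by
    intro δ hδ
    filter_upwards [hsup (δ / (|θ| + 1)) (by positivity)] with j hj k
    rw [abs_mul]
    calc |u j k| * |θ| ≤ (δ / (|θ| + 1)) * (|θ| + 1) := by
          apply mul_le_mul (hj k) (by linarith [abs_nonneg θ]) (abs_nonneg θ) (by positivity)
      _ = δ := div_mul_cancel₀ _ (by positivity)
  -- main quantitative estimate, eventually in `j`
  have main : ∀ e : ℝ, 0 < e → ∀ᶠ j in atTop,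
      (Summable fun k => ‖lam (u j k * θ) - Complex.exp (-((|u j k * θ| ^ α : ℝ) : ℂ))‖) ∧
      ∑' k, ‖lam (u j k * θ) - Complex.exp (-((|u j k * θ| ^ α : ℝ) : ℂ))‖ ≤ e := by
    intro e he
    obtain ⟨B, hB0, hB⟩ := hBB
    have hθα : (0:ℝ) ≤ |θ| ^ α := Real.rpow_nonneg (abs_nonneg θ) α
    set C : ℝ := |θ| ^ α * B + 1 with hC
    have hCpos : 0 < C := by nlinarith
    obtain ⟨δ, hδ, hkey⟩ := key (e / C) (by positivity)
    filter_upwards [hev δ hδ] with j hj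
    have hbound : ∀ k, ‖lam (u j k * θ) - Complex.exp (-((|u j k * θ| ^ α : ℝ) : ℂ))‖
        ≤ (e / C * |θ| ^ α) * |u j k| ^ α := by
      intro k
      calc ‖lam (u j k * θ) - Complex.exp (-((|u j k * θ| ^ α : ℝ) : ℂ))‖
          ≤ (e / C) * |u j k * θ| ^ α := hkey _ (hj k)
        _ = (e / C * |θ| ^ α) * |u j k| ^ α := by
            rw [abs_mul, Real.mul_rpow (abs_nonneg _) (abs_nonneg _)]; ring
    have hsummB : Summable fun k => (e / C * |θ| ^ α) * |u j k| ^ α := (hu j).mul_left _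
    have hsumm : Summable fun k =>
        ‖lam (u j k * θ) - Complex.exp (-((|u j k * θ| ^ α : ℝ) : ℂ))‖ :=
      Summable.of_nonneg_of_le (fun k => norm_nonneg _) hbound hsummB
    refine ⟨hsumm, ?_⟩
    have hT : ∑' k, |u j k| ^ α ≤ B := hB j
    have hT0 : (0:ℝ) ≤ ∑' k, |u j k| ^ α :=
      tsum_nonneg fun k => Real.rpow_nonneg (abs_nonneg _) α
    have heC : (0:ℝ) ≤ e / C := by positivity
    calc ∑' k, ‖lam (u j k * θ) - Complex.exp (-((|u j k * θ| ^ α : ℝ) : ℂ))‖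
        ≤ ∑' k, (e / C * |θ| ^ α) * |u j k| ^ α := Summable.tsum_le_tsum hbound hsumm hsummB
      _ = (e / C * |θ| ^ α) * ∑' k, |u j k| ^ α := tsum_mul_left
      _ ≤ (e / C) * C := by
          have h1 : (e / C * |θ| ^ α) * (∑' k, |u j k| ^ α) ≤ (e / C * |θ| ^ α) * B :=
            mul_le_mul_of_nonneg_left hT (by positivity)
          have h2 : (e / C) * C = e / C * (|θ| ^ α * B) + e / C := by rw [hC]; ring
          nlinarith
      _ = e := div_mul_cancel₀ e hCpos.ne'
  refine ⟨?_, ?_, ?_⟩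
  · -- Part 1: the ℝ≥0∞-valued sums tend to 0
    rw [ENNReal.tendsto_nhds_zero]
    intro ε hε
    obtain ⟨e, he0, hle⟩ : ∃ e : ℝ, 0 < e ∧ ENNReal.ofReal e ≤ ε := by
      rcases eq_or_ne ε ⊤ with h | h
      · exact ⟨1, one_pos, by simp [h]⟩
      · exact ⟨ε.toReal, ENNReal.toReal_pos hε.ne' h, by rw [ENNReal.ofReal_toReal h]⟩
    filter_upwards [main e he0] with j hj
    obtain ⟨hs, hsum⟩ := hj
    have heq : ∑' k, (‖lam (u j k * θ) - Complex.exp (-((|u j k * θ| ^ α : ℝ) : ℂ))‖₊ : ℝ≥0∞)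
        = ENNReal.ofReal (∑' k,
            ‖lam (u j k * θ) - Complex.exp (-((|u j k * θ| ^ α : ℝ) : ℂ))‖) := by
      rw [ENNReal.ofReal_tsum_of_nonneg (fun k => norm_nonneg _) hs]
      exact tsum_congr fun k => (ENNReal.ofReal_eq_coe_nnreal (norm_nonneg _)).symm
    rw [heq]
    exact le_trans (ENNReal.ofReal_le_ofReal hsum) hle
  · -- Part 2: convergence of the partial products of `λ`
    intro j
    obtain ⟨δ, hδ, hδ'⟩ := hnear1
    have hc : Summable fun k => ‖lam (u j k * θ) - 1‖ := by
      apply summable_of_isBigO_nat ((hu j).mul_left (2 * |θ| ^ α))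
      rw [Asymptotics.isBigO_iff]
      refine ⟨1, ?_⟩
      have h0 : Tendsto (fun k => |u j k| ^ α) atTop (𝓝 0) := (hu j).tendsto_atTop_zero
      have hpos : (0:ℝ) < (δ / (|θ| + 1)) ^ α := Real.rpow_pos_of_pos (by positivity) α
      filter_upwards [h0.eventually (gt_mem_nhds hpos)] with k hk
      have hle : |u j k| ≤ δ / (|θ| + 1) :=
        (Real.rpow_le_rpow_iff (abs_nonneg _) (by positivity) hα0).1 hk.le
      have habs : |u j k * θ| ≤ δ := by
        rw [abs_mul]
        calc |u j k| * |θ| ≤ (δ / (|θ| + 1)) * (|θ| + 1) := by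
              apply mul_le_mul hle (by linarith [abs_nonneg θ]) (abs_nonneg θ) (by positivity)
          _ = δ := div_mul_cancel₀ _ (by positivity)
      have hub := hδ' _ habs
      rw [Real.norm_eq_abs, abs_of_nonneg (norm_nonneg _)]
      calc ‖lam (u j k * θ) - 1‖ ≤ 2 * |u j k * θ| ^ α := hub
        _ = 2 * |θ| ^ α * |u j k| ^ α := by
            rw [abs_mul, Real.mul_rpow (abs_nonneg _) (abs_nonneg _)]; ring
        _ ≤ 1 * ‖2 * |θ| ^ α * |u j k| ^ α‖ := by
            rw [one_mul, Real.norm_eq_abs]; exact le_abs_self _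
    have hS : CauchySeq fun n => ∑ k ∈ Finset.range n, ‖lam (u j k * θ) - 1‖ :=
      hc.hasSum.tendsto_sum_nat.cauchySeq
    have hP : CauchySeq fun n => ∏ k ∈ Finset.range n, lam (u j k * θ) := by
      rw [Metric.cauchySeq_iff']
      intro ε hε
      obtain ⟨N, hN⟩ := Metric.cauchySeq_iff'.1 hS ε hε
      refine ⟨N, fun n hn => ?_⟩
      have hsumlt := hN n hn
      rw [Real.dist_eq] at hsumlt
      have hIco : ∑ k ∈ Finset.Ico N n, ‖lam (u j k * θ) - 1‖
          = (∑ k ∈ Finset.range n, ‖lam (u j k * θ) - 1‖)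
            - ∑ k ∈ Finset.range N, ‖lam (u j k * θ) - 1‖ :=
        Finset.sum_Ico_eq_sub _ hn
      have hlt : ∑ k ∈ Finset.Ico N n, ‖lam (u j k * θ) - 1‖ < ε := by
        rw [hIco]; exact lt_of_le_of_lt (le_abs_self _) hsumlt
      rw [dist_eq_norm]
      have hfact : (∏ k ∈ Finset.range n, lam (u j k * θ))
          = (∏ k ∈ Finset.range N, lam (u j k * θ)) * ∏ k ∈ Finset.Ico N n, lam (u j k * θ) :=
        (Finset.prod_range_mul_prod_Ico _ hn).symm
      have hdiff : (∏ k ∈ Finset.range n, lam (u j k * θ))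
          - (∏ k ∈ Finset.range N, lam (u j k * θ))
          = (∏ k ∈ Finset.range N, lam (u j k * θ))
            * ((∏ k ∈ Finset.Ico N n, lam (u j k * θ)) - 1) := by rw [hfact]; ring
      rw [hdiff, norm_mul]
      have hPN : ‖∏ k ∈ Finset.range N, lam (u j k * θ)‖ ≤ 1 :=
        le_trans (norm_prod_le _ _)
          (Finset.prod_le_one (fun _ _ => norm_nonneg _) (fun k _ => hlam1 _))
      have htel : ‖(∏ k ∈ Finset.Ico N n, lam (u j k * θ)) - 1‖
          ≤ ∑ k ∈ Finset.Ico N n, ‖lam (u j k * θ) - 1‖ := by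
        have h := tele_aux (fun k => lam (u j k * θ)) (fun _ => 1)
          (fun k => hlam1 _) (fun _ => by simp) (Finset.Ico N n)
        simpa using h
      calc ‖∏ k ∈ Finset.range N, lam (u j k * θ)‖
            * ‖(∏ k ∈ Finset.Ico N n, lam (u j k * θ)) - 1‖
          ≤ 1 * ∑ k ∈ Finset.Ico N n, ‖lam (u j k * θ) - 1‖ :=
            mul_le_mul hPN htel (norm_nonneg _) one_pos.le
        _ < ε := by rw [one_mul]; exact hlt
    exact cauchySeq_tendsto_of_complete hP
  · -- Part 3: the limits differ by o(1)
    intro L E hLt hEt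
    rw [NormedAddCommGroup.tendsto_nhds_zero]
    intro ε hε
    filter_upwards [main (ε / 2) (by positivity)] with j hj
    obtain ⟨hs, hsum⟩ := hj
    have hlim : Tendsto (fun n => (∏ k ∈ Finset.range n, lam (u j k * θ))
        - ∏ k ∈ Finset.range n, Complex.exp (-((|u j k * θ| ^ α : ℝ) : ℂ)))
        atTop (𝓝 (L j - E j)) := (hLt j).sub (hEt j)
    have hb : ∀ n : ℕ, ‖(∏ k ∈ Finset.range n, lam (u j k * θ))
        - ∏ k ∈ Finset.range n, Complex.exp (-((|u j k * θ| ^ α : ℝ) : ℂ))‖ ≤ ε / 2 := by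
      intro n
      have htel := tele_aux (fun k => lam (u j k * θ))
        (fun k => Complex.exp (-((|u j k * θ| ^ α : ℝ) : ℂ)))
        (fun k => hlam1 _)
        (fun k => hexpnorm _ (Real.rpow_nonneg (abs_nonneg _) α)) (Finset.range n)
      refine htel.trans (le_trans ?_ hsum)
      exact Summable.sum_le_tsum _ (fun k _ => norm_nonneg _) hs
    have hLE : ‖L j - E j‖ ≤ ε / 2 := le_of_tendsto' hlim.norm hb
    exact lt_of_le_of_lt hLE (by linarith)

end
end

section
/- Let α ∈ [1,2], d ≥ 1 and f ∈ L^α(ℝ^d). Then sup_{k∈ℤ^d} |f^h(k)| → 0 as h → 0⁺, where f^h(k) = h^{d/α − d} ∫_{h(k+[0,1)^d)} f(x) dx. -/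
open MeasureTheory ProbabilityTheory Filter Finset Topology

noncomputable section

/-- uniform smallness of the discretization. For `α ∈ [1,2]` and
`f ∈ L^α(ℝ^d)`, `sup_{k ∈ ℤ^d} |f^h(k)| → 0` as `h → 0⁺`. -/
theorem statement11
    (d : ℕ) (hd : 1 ≤ d)
    (α : ℝ) (hα : α ∈ Set.Icc (1 : ℝ) 2)
    (f : (Fin d → ℝ) → ℝ) (hf : MemLp' α f volume) :
    ∀ ε > (0 : ℝ), ∀ᶠ h in 𝓝[>] (0 : ℝ), ∀ k : Fin d → ℤ, |discr α h f k| ≤ ε := by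
  intro ε hε
  obtain ⟨hα1, hα2⟩ := hα
  have hαpos : (0:ℝ) < α := by linarith
  have hdpos : (0:ℝ) < d := by exact_mod_cast Nat.lt_of_lt_of_le Nat.zero_lt_one hd
  set β : ℝ := (d:ℝ)/α with hβdef
  have hβ : 0 < β := div_pos hdpos hαpos
  set c : ℝ := ε/2 with hc
  have hcpos : 0 < c := by positivity
  set φ : ℝ → ℝ → ℝ := fun M t => if M < |t| then |t| ^ α else 0 with hφdef
  have hφmeas : ∀ M, Measurable (φ M) := fun M =>
    Measurable.ite (measurableSet_lt measurable_const measurable_abs)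
      (measurable_abs.pow_const α) measurable_const
  have hφnn : ∀ M t, 0 ≤ φ M t := by
    intro M t
    by_cases h : M < |t| <;> simp only [hφdef, if_pos, if_neg, h, if_true, if_false] <;> positivity
  have hφle : ∀ M t, φ M t ≤ |t| ^ α := by
    intro M t
    by_cases h : M < |t|
    · simp only [hφdef, h, if_true]
      exact le_rfl
    · simp only [hφdef, h, if_false]
      positivity
  have hint : ∀ M, Integrable (fun x => φ M (f x)) volume := by
    intro M
    refine hf.2.mono ((hφmeas M).comp_aemeasurable hf.1).aestronglyMeasurable
      (Filter.Eventually.of_forall fun x => ?_)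
    rw [Real.norm_eq_abs, Real.norm_eq_abs, abs_of_nonneg (hφnn M (f x)),
      abs_of_nonneg (by positivity)]
    exact hφle M (f x)
  set δ : ℝ → ℝ := fun M => ∫ x, φ M (f x) with hδdef
  have hδ0 : Tendsto δ atTop (𝓝 0) := by
    have : Tendsto (fun M => ∫ x, φ M (f x)) atTop (𝓝 (∫ _x : Fin d → ℝ, (0:ℝ))) := by
      apply tendsto_integral_filter_of_dominated_convergence (fun x => |f x| ^ α)
      · exact Filter.Eventually.of_forall fun M =>
          ((hφmeas M).comp_aemeasurable hf.1).aestronglyMeasurable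
      · refine Filter.Eventually.of_forall fun M => Filter.Eventually.of_forall fun x => ?_
        rw [Real.norm_eq_abs, abs_of_nonneg (hφnn M (f x))]
        exact hφle M (f x)
      · exact hf.2
      · refine Filter.Eventually.of_forall fun x => ?_
        have hev : ∀ᶠ M in atTop, φ M (f x) = 0 :=
          eventually_atTop.2 ⟨|f x|, fun M hM => if_neg (not_lt.2 hM)⟩
        exact Tendsto.congr' (EventuallyEq.symm (hev : (fun M => φ M (f x)) =ᶠ[atTop] fun _ => 0)) tendsto_const_nhds
    simpa using this
  have hMtend : Tendsto (fun h : ℝ => c * h ^ (-β)) (𝓝[>] 0) atTop := by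
    have h1 : Tendsto (fun h : ℝ => h⁻¹) (𝓝[>] (0:ℝ)) atTop := tendsto_inv_nhdsGT_zero
    have h2 : Tendsto (fun x : ℝ => x ^ β) atTop atTop := tendsto_rpow_atTop hβ
    have h4 : Tendsto (fun h : ℝ => h ^ (-β)) (𝓝[>] (0:ℝ)) atTop := by
      refine (h2.comp h1).congr' ?_
      filter_upwards [self_mem_nhdsWithin] with h hh
      have hh' : (0:ℝ) < h := hh
      simp only [Function.comp]
      rw [Real.inv_rpow hh'.le, ← Real.rpow_neg hh'.le]
    exact h4.const_mul_atTop hcpos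
  have hδev : ∀ᶠ M in atTop, δ M < c ^ α := hδ0.eventually_lt_const (by positivity)
  filter_upwards [hMtend.eventually hδev, self_mem_nhdsWithin] with h hδh hh
  intro k
  have hh' : (0:ℝ) < h := hh
  set M := c * h ^ (-β) with hM
  have hMpos : 0 < M := mul_pos hcpos (Real.rpow_pos_of_pos hh' _)
  set s := cell d h k with hs
  have hvol : volume s = ENNReal.ofReal (h ^ d) := by
    rw [hs, cell, volume_pi_pi]
    have hI : ∀ i : Fin d, volume (Set.Ico (h * (k i:ℝ)) (h * ((k i:ℝ) + 1)))
        = ENNReal.ofReal h := by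
      intro i
      rw [Real.volume_Ico]
      congr 1
      ring
    rw [Finset.prod_congr rfl fun i _ => hI i, Finset.prod_const, Finset.card_univ,
      Fintype.card_fin, ← ENNReal.ofReal_pow hh'.le]
  have hvol_ne : volume s ≠ ⊤ := by rw [hvol]; exact ENNReal.ofReal_ne_top
  have hvolr : (volume s).toReal = h ^ d := by
    rw [hvol, ENNReal.toReal_ofReal (by positivity)]
  have hb : ∀ x, |f x| ≤ M + M ^ (1 - α) * φ M (f x) := by
    intro x
    by_cases hx : M < |f x|
    · have hfx : 0 < |f x| := lt_trans hMpos hx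
      have h1 : |f x| ^ (1 - α) ≤ M ^ (1 - α) :=
        Real.rpow_le_rpow_of_nonpos hMpos hx.le (by linarith)
      have h2 : |f x| = |f x| ^ α * |f x| ^ (1 - α) := by
        rw [← Real.rpow_add hfx]
        norm_num
      simp only [hφdef, if_pos hx]
      have h3 : |f x| ^ α * |f x| ^ (1-α) ≤ |f x| ^ α * M ^ (1-α) :=
        mul_le_mul_of_nonneg_left h1 (Real.rpow_nonneg (abs_nonneg _) _)
      nlinarith [h2, h3, hMpos.le]
    · simp only [hφdef, if_neg hx, mul_zero, add_zero]
      exact le_of_not_gt hx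
  have hintg : Integrable (fun x => φ M (f x)) volume := hint M
  have hbd_int : IntegrableOn (fun x => M + M ^ (1-α) * φ M (f x)) s volume := by
    apply Integrable.add
    · exact integrableOn_const hvol_ne
    · exact (hintg.integrableOn).const_mul _
  have hfint : IntegrableOn f s volume := by
    refine Integrable.mono hbd_int (hf.1.restrict.aestronglyMeasurable) ?_
    refine Filter.Eventually.of_forall fun x => ?_
    rw [Real.norm_eq_abs, Real.norm_eq_abs,
      abs_of_nonneg (add_nonneg hMpos.le (mul_nonneg (Real.rpow_nonneg hMpos.le _) (hφnn M (f x))))]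
    exact hb x
  have hsetle : ∫ x in s, φ M (f x) ≤ δ M :=
    setIntegral_le_integral hintg (Filter.Eventually.of_forall fun x => hφnn M (f x))
  have habs : |∫ x in s, f x| ≤ M * h ^ d + M ^ (1-α) * δ M := by
    calc |∫ x in s, f x| ≤ ∫ x in s, |f x| := by
          simpa [Real.norm_eq_abs] using
            norm_integral_le_integral_norm (μ := volume.restrict s) f
      _ ≤ ∫ x in s, (M + M ^ (1-α) * φ M (f x)) :=
          integral_mono hfint.abs hbd_int (fun x => hb x)
      _ = M * h^d + M^(1-α) * ∫ x in s, φ M (f x) := by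
          rw [integral_add (integrableOn_const hvol_ne : IntegrableOn (fun _ => M) s volume)
            ((hintg.integrableOn).const_mul _), setIntegral_const, integral_const_mul, measureReal_def, hvolr,
            smul_eq_mul, mul_comm]
      _ ≤ M * h^d + M^(1-α) * δ M := by
          have : (0:ℝ) ≤ M ^ (1-α) := Real.rpow_nonneg hMpos.le _
          nlinarith [hsetle]
  have hkey1 : h ^ (β - d) * (M * h ^ d) = c := by
    rw [hM, ← Real.rpow_natCast h d,
      show h ^ (β - ↑d) * (c * h ^ (-β) * h ^ (d:ℝ)) = c * (h ^ (β - ↑d) * h ^ (-β) * h ^ (d:ℝ))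
        from by ring, ← Real.rpow_add hh', ← Real.rpow_add hh',
      show β - ↑d + -β + (d:ℝ) = 0 from by ring, Real.rpow_zero, mul_one]
  have hkey2 : h ^ (β - d) * M ^ (1 - α) = c ^ (1-α) := by
    rw [hM, Real.mul_rpow hcpos.le (Real.rpow_pos_of_pos hh' _).le]
    rw [← Real.rpow_mul hh'.le]
    rw [show h ^ (β - (d:ℝ)) * (c ^ (1-α) * h ^ (-β * (1-α)))
        = c ^ (1-α) * (h ^ (β - (d:ℝ)) * h ^ (-β * (1-α))) from by ring,
      ← Real.rpow_add hh']
    have hexp : β - (d:ℝ) + -β * (1-α) = 0 := by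
      rw [hβdef]
      field_simp
      ring
    rw [hexp, Real.rpow_zero, mul_one]
  have hδle : δ M ≤ c ^ α := hδh.le
  have hpow_nn : (0:ℝ) ≤ h ^ (β - d) := (Real.rpow_pos_of_pos hh' _).le
  have hδnn : 0 ≤ δ M := integral_nonneg fun x => hφnn M (f x)
  calc |discr α h f k| = h ^ (β - d) * |∫ x in s, f x| := by
        rw [discr, abs_mul, abs_of_nonneg (Real.rpow_pos_of_pos hh' _).le]
    _ ≤ h ^ (β-d) * (M * h^d + M^(1-α) * δ M) := mul_le_mul_of_nonneg_left habs hpow_nn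
    _ = c + c^(1-α) * δ M := by rw [mul_add, hkey1, show h ^ (β-(d:ℝ)) * (M^(1-α) * δ M)
          = (h ^ (β-(d:ℝ)) * M^(1-α)) * δ M from by ring, hkey2]
    _ ≤ c + c^(1-α) * c^α := by
        have : (0:ℝ) ≤ c ^ (1-α) := Real.rpow_nonneg hcpos.le _
        nlinarith
    _ = c + c := by rw [← Real.rpow_add hcpos]; norm_num
    _ = ε := by rw [hc]; ring

end
end

section
/- Let α ∈ (0,1), d ≥ 1, and let f ∈ L^1(ℝ^d) ∩ L^α(ℝ^d) satisfy: there exist C > 0, N > 0 and δ > d/α such that |f(x)| ≤ C|x|^{−δ} whenever |x| ≥ N. Then as h → 0⁺: (1) ‖f_h‖_{L^α(ℝ^d)}^α → ‖f‖_{L^α(ℝ^d)}^α, and (2) sup_{k∈ℤ^d} |f^h(k)| → 0, where f^h(k) = h^{d/α − d} ∫_{h(k+[0,1)^d)} f(x) dx. -/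
open MeasureTheory ProbabilityTheory Filter Finset Topology

noncomputable section

section AuxST15

open Metric Set

variable {d : ℕ}

lemma st15_rpow_add_le {α : ℝ} (hα0 : 0 ≤ α) (hα1 : α ≤ 1) {u v : ℝ} (hu : 0 ≤ u) (hv : 0 ≤ v) :
    (u + v) ^ α ≤ u ^ α + v ^ α := by
  have h := NNReal.rpow_add_le_add_rpow u.toNNReal v.toNNReal hα0 hα1
  have h' := NNReal.coe_le_coe.2 h
  simpa [NNReal.coe_rpow, NNReal.coe_add, Real.coe_toNNReal u hu, Real.coe_toNNReal v hv] using h'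

lemma st15_abs_rpow_le {α : ℝ} (hα0 : 0 ≤ α) (hα1 : α ≤ 1) (a b : ℝ) :
    |a| ^ α ≤ |b| ^ α + |a - b| ^ α := by
  have h1 : |a| ≤ |b| + |a - b| := by
    calc |a| = |b + (a - b)| := by ring_nf
    _ ≤ |b| + |a - b| := abs_add_le _ _
  calc |a| ^ α ≤ (|b| + |a - b|) ^ α := Real.rpow_le_rpow (abs_nonneg a) h1 hα0
  _ ≤ _ := st15_rpow_add_le hα0 hα1 (abs_nonneg b) (abs_nonneg _)

lemma st15_ofReal_abs_rpow_le {α : ℝ} (hα0 : 0 ≤ α) (hα1 : α ≤ 1) (a b : ℝ) :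
    ENNReal.ofReal (|a| ^ α) ≤ ENNReal.ofReal (|b| ^ α) + ENNReal.ofReal (|a - b| ^ α) :=
  le_trans (ENNReal.ofReal_le_ofReal (st15_abs_rpow_le hα0 hα1 a b)) ENNReal.ofReal_add_le

lemma st15_mem_cell_iff {h : ℝ} {k : Fin d → ℤ} {x : Fin d → ℝ} :
    x ∈ cell d h k ↔ ∀ i, h * k i ≤ x i ∧ x i < h * (k i + 1) := by
  simp [cell, Set.mem_univ_pi, Set.mem_Ico]

lemma st15_floor_mem_cell {h : ℝ} (hh : 0 < h) (x : Fin d → ℝ) :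
    x ∈ cell d h (fun i => ⌊x i / h⌋) := by
  rw [st15_mem_cell_iff]
  intro i
  constructor
  · calc h * (⌊x i / h⌋ : ℝ) ≤ h * (x i / h) :=
        mul_le_mul_of_nonneg_left (Int.floor_le _) hh.le
    _ = x i := by field_simp
  · calc x i = h * (x i / h) := by field_simp
    _ < h * ((⌊x i / h⌋ : ℝ) + 1) :=
        mul_lt_mul_of_pos_left (Int.lt_floor_add_one _) hh

lemma st15_floor_eq_of_mem_cell {h : ℝ} (hh : 0 < h) {k : Fin d → ℤ} {x : Fin d → ℝ}
    (hx : x ∈ cell d h k) : (fun i => ⌊x i / h⌋) = k := by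
  funext i
  obtain ⟨h1, h2⟩ := st15_mem_cell_iff.1 hx i
  rw [Int.floor_eq_iff]
  constructor
  · rw [le_div_iff₀ hh]
    nlinarith [h1]
  · rw [div_lt_iff₀ hh]
    nlinarith [h2]

lemma st15_measurableSet_cell (h : ℝ) (k : Fin d → ℤ) : MeasurableSet (cell d h k) :=
  MeasurableSet.univ_pi fun _ => measurableSet_Ico

lemma st15_volume_cell {h : ℝ} (hh : 0 < h) (k : Fin d → ℤ) :
    volume (cell d h k) = ENNReal.ofReal (h ^ d) := by
  rw [cell, volume_pi_pi]
  have h1 : ∀ i : Fin d, volume (Set.Ico (h * k i) (h * (k i + 1))) = ENNReal.ofReal h := by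
    intro i; rw [Real.volume_Ico]; congr 1; ring
  rw [Finset.prod_congr rfl fun i _ => h1 i, Finset.prod_const, Finset.card_univ,
    Fintype.card_fin, ← ENNReal.ofReal_pow hh.le]

/-- center of a cell -/
def cellCenter (d : ℕ) (h : ℝ) (k : Fin d → ℤ) : Fin d → ℝ := fun i => h * k i + h / 2

lemma st15_cell_subset_closedBall {h : ℝ} (hh : 0 < h) (k : Fin d → ℤ) :
    cell d h k ⊆ closedBall (cellCenter d h k) (h / 2) := by
  intro x hx
  rw [mem_closedBall, dist_pi_le_iff (by positivity)]
  intro i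
  obtain ⟨h1, h2⟩ := st15_mem_cell_iff.1 hx i
  rw [mul_add, mul_one] at h2
  rw [Real.dist_eq, abs_le, cellCenter]
  constructor <;> [linarith; linarith]

lemma st15_volume_closedBall_cell {h : ℝ} (hh : 0 < h) (k : Fin d → ℤ) :
    volume (closedBall (cellCenter d h k) (h / 2)) = ENNReal.ofReal (h ^ d) := by
  rw [closedBall_pi _ (by positivity : (0:ℝ) ≤ h / 2), volume_pi_pi]
  have h1 : ∀ i : Fin d, volume (closedBall (cellCenter d h k i) (h / 2)) = ENNReal.ofReal h := by
    intro i; rw [Real.closedBall_eq_Icc, Real.volume_Icc]; congr 1; ring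
  rw [Finset.prod_congr rfl fun i _ => h1 i, Finset.prod_const, Finset.card_univ,
    Fintype.card_fin, ← ENNReal.ofReal_pow hh.le]

lemma st15_cell_ae_eq {h : ℝ} (hh : 0 < h) (k : Fin d → ℤ) :
    cell d h k =ᵐ[volume] closedBall (cellCenter d h k) (h / 2) := by
  refine ae_eq_of_subset_of_measure_ge (st15_cell_subset_closedBall hh k) ?_
    (st15_measurableSet_cell h k).nullMeasurableSet ?_
  · rw [st15_volume_cell hh, st15_volume_closedBall_cell hh]
  · rw [st15_volume_closedBall_cell hh]; exact ENNReal.ofReal_ne_top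

lemma st15_pconst_eq_average {h : ℝ} (hh : 0 < h) (f : (Fin d → ℝ) → ℝ) (x : Fin d → ℝ) :
    pconst h f x = ⨍ y in closedBall (cellCenter d h (fun i => ⌊x i / h⌋)) (h / 2), f y := by
  rw [setAverage_eq, setIntegral_congr_set (st15_cell_ae_eq hh _).symm,
    measureReal_def, st15_volume_closedBall_cell hh, ENNReal.toReal_ofReal (by positivity), pconst,
    Real.rpow_neg hh.le, Real.rpow_natCast, smul_eq_mul]

lemma st15_pconst_measurable {h : ℝ} (hh : 0 < h) (f : (Fin d → ℝ) → ℝ) :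
    Measurable (pconst h f) := by
  have : pconst h f =
      (fun k : Fin d → ℤ => h ^ (-(d : ℝ)) * ∫ y in cell d h k, f y) ∘ (fun x i => ⌊x i / h⌋) :=
    rfl
  rw [this]
  exact (measurable_of_countable _).comp
    (measurable_pi_lambda _ fun i => Int.measurable_floor.comp (by fun_prop : Measurable fun c : Fin d → ℝ => c i / h))

lemma st15_abs_pconst_le {h : ℝ} (hh : 0 < h) (f : (Fin d → ℝ) → ℝ) (x : Fin d → ℝ) :
    |pconst h f x| ≤ pconst h (fun y => |f y|) x := by
  rw [pconst, pconst, abs_mul, abs_of_pos (Real.rpow_pos_of_pos hh _)]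
  refine mul_le_mul_of_nonneg_left ?_ (Real.rpow_nonneg hh.le _)
  simpa [Real.norm_eq_abs] using
    norm_integral_le_integral_norm (μ := volume.restrict (cell d h (fun i => ⌊x i / h⌋))) f

lemma st15_pconst_tendsto_ae {f : (Fin d → ℝ) → ℝ} (hf : Integrable f (volume : Measure (Fin d → ℝ))) :
    ∀ᵐ x : Fin d → ℝ, Tendsto (fun h => pconst h f x) (𝓝[>] (0:ℝ)) (𝓝 (f x)) := by
  filter_upwards [IsUnifLocDoublingMeasure.ae_tendsto_average (volume : Measure (Fin d → ℝ))
    hf.locallyIntegrable 1] with x hx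
  have hδ : Tendsto (fun h : ℝ => h / 2) (𝓝[>] (0:ℝ)) (𝓝[>] (0:ℝ)) := by
    rw [tendsto_nhdsWithin_iff]
    constructor
    · have h1 : Tendsto (fun h : ℝ => h / 2) (𝓝 (0:ℝ)) (𝓝 ((0:ℝ) / 2)) :=
        ((continuous_id.div_const 2).tendsto 0)
      simpa using h1.mono_left nhdsWithin_le_nhds
    · filter_upwards [self_mem_nhdsWithin] with h hh
      exact div_pos (Set.mem_Ioi.1 hh) (by norm_num : (0:ℝ) < 2)
  have hmem : ∀ᶠ h in 𝓝[>] (0:ℝ),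
      x ∈ closedBall (cellCenter d h (fun i => ⌊x i / h⌋)) (1 * (h / 2)) := by
    filter_upwards [self_mem_nhdsWithin] with h hh
    rw [one_mul]
    exact st15_cell_subset_closedBall hh _ (st15_floor_mem_cell hh x)
  have h2 := hx (fun h => cellCenter d h (fun i => ⌊x i / h⌋)) (fun h => h / 2) hδ hmem
  refine Filter.Tendsto.congr' ?_ h2
  filter_upwards [self_mem_nhdsWithin] with h hh
  exact (st15_pconst_eq_average hh f x).symm


open Metric Set
open scoped ENNReal NNReal
variable {d : ℕ}

lemma st15_lintegral_pconst_abs {h : ℝ} (hh : 0 < h) {f : (Fin d → ℝ) → ℝ}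
    (hf : Integrable f (volume : Measure (Fin d → ℝ))) :
    ∫⁻ x, ENNReal.ofReal (pconst h (fun y => |f y|) x) = ∫⁻ x, ENNReal.ofReal |f x| := by
  have hcell : ∀ k : Fin d → ℤ, MeasurableSet (cell d h k) := st15_measurableSet_cell h
  have hdisj : Pairwise (Function.onFun Disjoint fun k : Fin d → ℤ => cell d h k) := by
    intro k k' hkk'
    rw [Function.onFun, Set.disjoint_left]
    intro x hx hx'
    exact hkk' ((st15_floor_eq_of_mem_cell hh hx).symm.trans (st15_floor_eq_of_mem_cell hh hx'))
  have hunion : (⋃ k : Fin d → ℤ, cell d h k) = Set.univ := by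
    ext x
    simp only [Set.mem_iUnion, Set.mem_univ, iff_true]
    exact ⟨_, st15_floor_mem_cell hh x⟩
  have key : ∀ g : (Fin d → ℝ) → ℝ≥0∞,
      ∫⁻ x, g x = ∑' k : Fin d → ℤ, ∫⁻ x in cell d h k, g x := by
    intro g
    rw [← setLIntegral_univ, ← hunion, lintegral_iUnion hcell hdisj]
  rw [key, key (fun x => ENNReal.ofReal |f x|)]
  refine tsum_congr fun k => ?_
  have hconst : ∀ x ∈ cell d h k,
      ENNReal.ofReal (pconst h (fun y => |f y|) x) =
        ENNReal.ofReal (h ^ (-(d:ℝ)) * ∫ y in cell d h k, |f y|) := by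
    intro x hx
    rw [pconst, st15_floor_eq_of_mem_cell hh hx]
  rw [setLIntegral_congr_fun (hcell k) hconst, setLIntegral_const,
    st15_volume_cell hh,
    ← ofReal_integral_eq_lintegral_ofReal (hf.abs.integrableOn)
      (MeasureTheory.ae_of_all _ fun y => abs_nonneg (f y)),
    ← ENNReal.ofReal_mul
      (mul_nonneg (Real.rpow_nonneg hh.le _) (integral_nonneg fun y => abs_nonneg (f y)))]
  congr 1
  have hd : h ^ (-(d:ℝ)) = (h ^ d)⁻¹ := by rw [Real.rpow_neg hh.le, Real.rpow_natCast]
  have hdp : (0:ℝ) < h ^ d := pow_pos hh d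
  rw [hd]
  field_simp

lemma st15_glDCT {β : Type*} [MeasurableSpace β] {μ : Measure β} {φ ψ : ℕ → β → ℝ≥0∞}
    {Ψ : β → ℝ≥0∞}
    (hφm : ∀ n, AEMeasurable (φ n) μ) (hψm : ∀ n, AEMeasurable (ψ n) μ)
    (hle : ∀ n a, φ n a ≤ ψ n a)
    (hΨfin : ∀ a, Ψ a ≠ ⊤)
    (hφ0 : ∀ᵐ a ∂μ, Tendsto (fun n => φ n a) atTop (𝓝 0))
    (hψΨ : ∀ᵐ a ∂μ, Tendsto (fun n => ψ n a) atTop (𝓝 (Ψ a)))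
    (hint : Tendsto (fun n => ∫⁻ a, ψ n a ∂μ) atTop (𝓝 (∫⁻ a, Ψ a ∂μ)))
    (hfin : ∫⁻ a, Ψ a ∂μ ≠ ⊤) :
    Tendsto (fun n => ∫⁻ a, φ n a ∂μ) atTop (𝓝 0) := by
  set L := ∫⁻ a, Ψ a ∂μ with hLdef
  set χ := fun n a => ψ n a - φ n a with hχdef
  have hχm : ∀ n, AEMeasurable (χ n) μ := fun n => (hψm n).sub (hφm n)
  have hsum : ∀ n, ∫⁻ a, ψ n a ∂μ = ∫⁻ a, χ n a ∂μ + ∫⁻ a, φ n a ∂μ := by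
    intro n
    rw [← lintegral_add_left' (hχm n)]
    refine lintegral_congr fun a => ?_
    exact (tsub_add_cancel_of_le (hle n a)).symm
  have hχtend : ∀ᵐ a ∂μ, Tendsto (fun n => χ n a) atTop (𝓝 (Ψ a)) := by
    filter_upwards [hφ0, hψΨ] with a h0 hψ
    simpa using ENNReal.Tendsto.sub hψ h0 (Or.inl (hΨfin a))
  have hliminf : L ≤ liminf (fun n => ∫⁻ a, χ n a ∂μ) atTop := by
    calc L = ∫⁻ a, liminf (fun n => χ n a) atTop ∂μ :=
      lintegral_congr_ae (hχtend.mono fun a ha => ha.liminf_eq.symm)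
    _ ≤ _ := lintegral_liminf_le' hχm
  have hlimsup : limsup (fun n => ∫⁻ a, χ n a ∂μ) atTop ≤ L := by
    have h1 : ∀ n, ∫⁻ a, χ n a ∂μ ≤ ∫⁻ a, ψ n a ∂μ := fun n => lintegral_mono fun a => tsub_le_self
    calc limsup (fun n => ∫⁻ a, χ n a ∂μ) atTop
        ≤ limsup (fun n => ∫⁻ a, ψ n a ∂μ) atTop := limsup_le_limsup (Eventually.of_forall h1)
    _ = L := hint.limsup_eq
  have hχint : Tendsto (fun n => ∫⁻ a, χ n a ∂μ) atTop (𝓝 L) :=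
    tendsto_of_le_liminf_of_limsup_le hliminf hlimsup
  have hev : ∀ᶠ n in atTop,
      ∫⁻ a, φ n a ∂μ = ∫⁻ a, ψ n a ∂μ - ∫⁻ a, χ n a ∂μ := by
    filter_upwards [hχint.eventually_lt_const (show L < ⊤ from hfin.lt_top)] with n hn
    rw [hsum n, ENNReal.add_sub_cancel_left hn.ne]
  have hfinal : Tendsto (fun n => ∫⁻ a, ψ n a ∂μ - ∫⁻ a, χ n a ∂μ) atTop (𝓝 0) := by
    simpa using ENNReal.Tendsto.sub hint hχint (Or.inl hfin)
  refine Filter.Tendsto.congr' ?_ hfinal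
  filter_upwards [hev] with n hn using hn.symm

open Metric Set
open scoped ENNReal NNReal
variable {d : ℕ}

lemma st15_pconst_tail {f : (Fin d → ℝ) → ℝ} (hf : Integrable f (volume : Measure (Fin d → ℝ)))
    {C N δ : ℝ} (hC : 0 < C) (hN : 0 < N) (hδpos : 0 < δ)
    (htail : ∀ x : Fin d → ℝ, N ≤ ‖x‖ → |f x| ≤ C * ‖x‖ ^ (-δ))
    {h : ℝ} (hh : 0 < h) (hhN : h ≤ N) {x : Fin d → ℝ} (hx : 2 * N ≤ ‖x‖) :
    |pconst h f x| ≤ C * 2 ^ δ * ‖x‖ ^ (-δ) := by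
  set k : Fin d → ℤ := fun i => ⌊x i / h⌋ with hk
  have hxk : x ∈ cell d h k := st15_floor_mem_cell hh x
  have hxpos : 0 < ‖x‖ := lt_of_lt_of_le (by linarith) hx
  have hbound : ∀ y ∈ cell d h k, ‖f y‖ ≤ C * (‖x‖ / 2) ^ (-δ) := by
    intro y hy
    have hyx : ∀ i, |y i - x i| ≤ h := by
      intro i
      obtain ⟨a1, a2⟩ := st15_mem_cell_iff.1 hy i
      obtain ⟨b1, b2⟩ := st15_mem_cell_iff.1 hxk i
      rw [mul_add, mul_one] at a2 b2
      rw [abs_le]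
      constructor <;> linarith
    have hnorm : ‖y - x‖ ≤ h := by
      rw [pi_norm_le_iff_of_nonneg hh.le]
      intro i
      simpa [Real.norm_eq_abs] using hyx i
    have h1 : ‖x‖ / 2 ≤ ‖y‖ := by
      have h2 := norm_sub_norm_le x y
      rw [norm_sub_rev] at h2
      linarith
    have h2 : N ≤ ‖y‖ := le_trans (by linarith) h1
    calc ‖f y‖ = |f y| := (Real.norm_eq_abs _)
    _ ≤ C * ‖y‖ ^ (-δ) := htail y h2
    _ ≤ C * (‖x‖ / 2) ^ (-δ) := by
        refine mul_le_mul_of_nonneg_left ?_ hC.le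
        exact Real.rpow_le_rpow_of_nonpos (by positivity) h1 (neg_nonpos.2 hδpos.le)
  have hvol : volume (cell d h k) = ENNReal.ofReal (h ^ d) := st15_volume_cell hh k
  have hint := norm_setIntegral_le_of_norm_le_const (μ := volume) (s := cell d h k)
    (by rw [hvol]; exact ENNReal.ofReal_lt_top) hbound
  rw [measureReal_def, hvol, ENNReal.toReal_ofReal (by positivity)] at hint
  have hstep : |pconst h f x| = h ^ (-(d:ℝ)) * ‖∫ y in cell d h k, f y‖ := by
    rw [pconst, abs_mul, abs_of_pos (Real.rpow_pos_of_pos hh _), Real.norm_eq_abs]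
  rw [hstep]
  calc h ^ (-(d:ℝ)) * ‖∫ y in cell d h k, f y‖
      ≤ h ^ (-(d:ℝ)) * (C * (‖x‖ / 2) ^ (-δ) * h ^ d) :=
        mul_le_mul_of_nonneg_left hint (Real.rpow_nonneg hh.le _)
  _ = C * 2 ^ δ * ‖x‖ ^ (-δ) := by
      have hd : h ^ (-(d:ℝ)) = (h ^ d)⁻¹ := by rw [Real.rpow_neg hh.le, Real.rpow_natCast]
      have e1 : (‖x‖ / 2 : ℝ) ^ (-δ) = ‖x‖ ^ (-δ) * 2 ^ δ := by
        rw [Real.div_rpow hxpos.le (by norm_num : (0:ℝ) ≤ 2),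
          Real.rpow_neg (by norm_num : (0:ℝ) ≤ 2)]
        field_simp
      have hdp : (0:ℝ) < h ^ d := pow_pos hh d
      rw [hd, e1]
      field_simp
end AuxST15

open scoped ENNReal NNReal

/-- discretization estimates for `α ∈ (0,1)`. For
`f ∈ L^1 ∩ L^α(ℝ^d)` with a power tail bound `|f(x)| ≤ C|x|^{-δ}` (`δ > d/α`) at
infinity: (1) `‖f_h‖_{L^α}^α → ‖f‖_{L^α}^α` and (2) `sup_{k ∈ ℤ^d} |f^h(k)| → 0`
as `h → 0⁺`. -/
theorem statement15
    (d : ℕ) (hd : 1 ≤ d)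
    (α : ℝ) (hα : α ∈ Set.Ioo (0 : ℝ) 1)
    (f : (Fin d → ℝ) → ℝ)
    (hf1 : Integrable f volume) (hfα : MemLp' α f volume)
    (C N δ : ℝ) (hC : 0 < C) (hN : 0 < N) (hδ : (d : ℝ) / α < δ)
    (htail : ∀ x : Fin d → ℝ, N ≤ ‖x‖ → |f x| ≤ C * ‖x‖ ^ (-δ)) :
    Tendsto (fun h => ∫ x, |pconst h f x| ^ α) (𝓝[>] (0 : ℝ))
      (𝓝 (∫ x, |f x| ^ α)) ∧
    ∀ ε > (0 : ℝ), ∀ᶠ h in 𝓝[>] (0 : ℝ), ∀ k : Fin d → ℤ, |discr α h f k| ≤ ε := by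
  obtain ⟨hα0, hα1⟩ := hα
  have hd0 : (0:ℝ) < d := by exact_mod_cast Nat.lt_of_lt_of_le Nat.zero_lt_one hd
  constructor
  · -- Part 1
    have hfaem : AEMeasurable f (volume : Measure (Fin d → ℝ)) := hfα.1
    have hδpos : 0 < δ := lt_trans (div_pos hd0 hα0) hδ
    have hq' : (d:ℝ) < δ * α := (div_lt_iff₀ hα0).1 hδ
    set q : ℝ := δ * α with hq_def
    have hq0 : 0 < q := by rw [hq_def]; exact mul_pos hδpos hα0
    set K1 : ℝ := C * 2 ^ δ with hK1_def
    have h2δpos : (0:ℝ) < 2 ^ δ := Real.rpow_pos_of_pos (by norm_num) δ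
    have hK1 : 0 < K1 := by rw [hK1_def]; exact mul_pos hC h2δpos
    set K2 : ℝ := K1 ^ α * 2 ^ q with hK2_def
    have hK2 : 0 ≤ K2 := by
      rw [hK2_def]
      exact mul_nonneg (Real.rpow_nonneg hK1.le _) (Real.rpow_nonneg (by norm_num) _)
    set G : (Fin d → ℝ) → ℝ := fun x => K2 * (1 + ‖x‖) ^ (-q) with hG_def
    have hGnn : ∀ x, 0 ≤ G x := fun x => mul_nonneg hK2 (Real.rpow_nonneg (by positivity) _)
    have hGcont : Continuous G := by
      apply continuous_const.mul
      rw [continuous_iff_continuousAt]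
      intro x
      exact (Real.continuousAt_rpow_const _ _ (Or.inl (by positivity))).comp
        (continuous_const.add continuous_norm).continuousAt
    have hGint : Integrable G volume := by
      have h0 : Integrable (fun x : Fin d → ℝ => (1 + ‖x‖) ^ (-q)) volume := by
        apply integrable_one_add_norm
        simpa using hq'
      exact h0.const_mul K2
    have hGlt : ∫⁻ x, ENNReal.ofReal (G x) < ⊤ := by
      rw [← lintegral_enorm_of_nonneg hGnn]
      exact hGint.2
    set R0 : ℝ := max (2 * N) 1 with hR0_def
    set St : ℕ → Set (Fin d → ℝ) := fun n => {x | (n:ℝ) ≤ ‖x‖} with hSt_def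
    have hStm : ∀ n, MeasurableSet (St n) := fun n =>
      (isClosed_le continuous_const continuous_norm).measurableSet
    set Tt : ℕ → ℝ≥0∞ := fun n => ∫⁻ x in St n, ENNReal.ofReal (G x) with hTt_def
    have hTt0 : Tendsto Tt atTop (𝓝 0) := by
      have heq : ∀ n : ℕ, ∫⁻ x, (St n).indicator (fun y => ENNReal.ofReal (G y)) x = Tt n :=
        fun n => lintegral_indicator (hStm n) _
      have hdct := tendsto_lintegral_of_dominated_convergence (μ := volume)
        (F := fun n x => (St n).indicator (fun y => ENNReal.ofReal (G y)) x)
        (f := fun _ => 0) (fun y => ENNReal.ofReal (G y))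
        (fun n => (ENNReal.measurable_ofReal.comp hGcont.measurable).indicator (hStm n))
        (fun n => MeasureTheory.ae_of_all _ fun x => Set.indicator_le_self _ _ x)
        hGlt.ne
        (by
          refine MeasureTheory.ae_of_all _ fun x => ?_
          obtain ⟨m, hm⟩ := exists_nat_gt ‖x‖
          refine Filter.Tendsto.congr' ?_ tendsto_const_nhds
          filter_upwards [eventually_ge_atTop m] with n hn
          refine (Set.indicator_of_notMem ?_ _).symm
          simp only [hSt_def, Set.mem_setOf_eq, not_le]
          calc ‖x‖ < m := hm
          _ ≤ n := by exact_mod_cast hn)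
      simp only [heq] at hdct
      simpa using hdct
    have key_t : ∀ x : Fin d → ℝ, R0 ≤ ‖x‖ → ∀ t : ℝ, |t| ≤ K1 * ‖x‖ ^ (-δ) → |t| ^ α ≤ G x := by
      intro x hx t ht
      have hx1 : (1:ℝ) ≤ ‖x‖ := le_trans (le_max_right _ _) hx
      have hxpos : (0:ℝ) < ‖x‖ := lt_of_lt_of_le one_pos hx1
      have h1 : |t| ^ α ≤ (K1 * ‖x‖ ^ (-δ)) ^ α := Real.rpow_le_rpow (abs_nonneg t) ht hα0.le
      have h2 : (K1 * ‖x‖ ^ (-δ)) ^ α = K1 ^ α * ‖x‖ ^ (-q) := by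
        rw [Real.mul_rpow hK1.le (Real.rpow_nonneg hxpos.le _), ← Real.rpow_mul hxpos.le,
          hq_def, neg_mul]
      have h3 : ‖x‖ ^ (-q) ≤ 2 ^ q * (1 + ‖x‖) ^ (-q) := by
        have h4 : (1 + ‖x‖) / 2 ≤ ‖x‖ := by linarith
        have h5 : ‖x‖ ^ (-q) ≤ ((1 + ‖x‖) / 2) ^ (-q) :=
          Real.rpow_le_rpow_of_nonpos (by positivity) h4 (neg_nonpos.2 hq0.le)
        have h6 : ((1 + ‖x‖) / 2) ^ (-q) = 2 ^ q * (1 + ‖x‖) ^ (-q) := by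
          rw [Real.div_rpow (by positivity) (by norm_num : (0:ℝ) ≤ 2),
            Real.rpow_neg (by norm_num : (0:ℝ) ≤ 2), div_eq_mul_inv, inv_inv, mul_comm]
        linarith [h6.le]
      calc |t| ^ α ≤ K1 ^ α * ‖x‖ ^ (-q) := by rw [← h2]; exact h1
      _ ≤ K1 ^ α * (2 ^ q * (1 + ‖x‖) ^ (-q)) :=
          mul_le_mul_of_nonneg_left h3 (Real.rpow_nonneg hK1.le _)
      _ = G x := by rw [hG_def, hK2_def]; ring
    have hK1f : ∀ x : Fin d → ℝ, 2 * N ≤ ‖x‖ → |f x| ≤ K1 * ‖x‖ ^ (-δ) := by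
      intro x hx
      have h1 : N ≤ ‖x‖ := le_trans (by linarith) hx
      refine le_trans (htail x h1) ?_
      have h2 : (1:ℝ) ≤ 2 ^ δ := by
        have h3 := Real.rpow_le_rpow_of_exponent_le (by norm_num : (1:ℝ) ≤ 2) hδpos.le
        simpa using h3
      have h3 : 0 ≤ ‖x‖ ^ (-δ) := Real.rpow_nonneg (norm_nonneg x) _
      rw [hK1_def]
      exact mul_le_mul_of_nonneg_right (by nlinarith : C ≤ C * 2 ^ δ) h3
    set L : ℝ≥0∞ := ∫⁻ x, ENNReal.ofReal (|f x| ^ α) with hL_def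
    have hfαm : AEStronglyMeasurable (fun x => |f x| ^ α) volume := hfα.2.aestronglyMeasurable
    have hL : L ≠ ⊤ := by
      rw [hL_def, ← lintegral_enorm_of_nonneg (fun x => Real.rpow_nonneg (abs_nonneg _) _)]
      exact hfα.2.2.ne
    set A : ℝ → ℝ≥0∞ := fun h => ∫⁻ x, ENNReal.ofReal (|pconst h f x| ^ α) with hA_def
    set Eh : ℝ → ℝ≥0∞ := fun h => ∫⁻ x, ENNReal.ofReal (|pconst h f x - f x| ^ α) with hE_def
    set D : ℝ → ℝ≥0∞ := fun h => ∫⁻ x, ENNReal.ofReal |pconst h f x - f x| with hD_def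
    have hffin : ∫⁻ x, ENNReal.ofReal |f x| ∂(volume : Measure (Fin d → ℝ)) ≠ ⊤ := by
      rw [← lintegral_enorm_of_nonneg (fun x => abs_nonneg (f x))]
      have h1 : (fun x => ‖|f x|‖ₑ) = fun x => ‖f x‖ₑ := by
        funext x
        simp [Real.nnnorm_abs]
      rw [h1]
      exact hf1.2.ne
    have step3 : Tendsto D (𝓝[>] (0:ℝ)) (𝓝 0) := by
      rw [tendsto_iff_seq_tendsto]
      intro u hu
      have hupos : ∀ᶠ n in atTop, u n ∈ Set.Ioi (0:ℝ) := hu self_mem_nhdsWithin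
      obtain ⟨m, hm⟩ := eventually_atTop.1 hupos
      have hcomp : (D ∘ u) = fun n => D (u n) := rfl
      rw [hcomp, ← tendsto_add_atTop_iff_nat m]
      have hu2 : Tendsto (fun n => u (n + m)) atTop (𝓝[>] (0:ℝ)) :=
        hu.comp (tendsto_add_atTop_nat m)
      have hpos : ∀ n, 0 < u (n + m) := fun n => hm _ (Nat.le_add_left m n)
      refine st15_glDCT (μ := (volume : Measure (Fin d → ℝ)))
        (φ := fun n a => ENNReal.ofReal |pconst (u (n + m)) f a - f a|)
        (ψ := fun n a => ENNReal.ofReal (pconst (u (n + m)) (fun y => |f y|) a)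
          + ENNReal.ofReal |f a|)
        (Ψ := fun a => 2 * ENNReal.ofReal |f a|) ?_ ?_ ?_ ?_ ?_ ?_ ?_ ?_
      · intro n
        have h1 : Measurable (pconst (u (n + m)) f) := st15_pconst_measurable (hpos n) f
        fun_prop
      · intro n
        have h1 : Measurable (pconst (u (n + m)) (fun y => |f y|)) :=
          st15_pconst_measurable (hpos n) _
        fun_prop
      · intro n a
        calc ENNReal.ofReal |pconst (u (n + m)) f a - f a|
            ≤ ENNReal.ofReal (pconst (u (n + m)) (fun y => |f y|) a + |f a|) := by
              refine ENNReal.ofReal_le_ofReal ?_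
              calc |pconst (u (n + m)) f a - f a| ≤ |pconst (u (n + m)) f a| + |f a| := by
                    simpa [Real.norm_eq_abs] using norm_sub_le (pconst (u (n + m)) f a) (f a)
              _ ≤ _ := add_le_add_left (st15_abs_pconst_le (hpos n) f a) _
        _ ≤ _ := ENNReal.ofReal_add_le
      · intro a
        exact ENNReal.mul_ne_top (by norm_num) ENNReal.ofReal_ne_top
      · filter_upwards [st15_pconst_tendsto_ae hf1] with a ha
        have h3 : Tendsto (fun n => |pconst (u (n + m)) f a - f a|) atTop (𝓝 0) := by
          have h4 := (ha.comp hu2).sub_const (f a)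
          simpa using h4.abs
        have h5 := (ENNReal.continuous_ofReal.tendsto 0).comp h3
        simpa [Function.comp_def] using h5
      · filter_upwards [st15_pconst_tendsto_ae (f := fun y => |f y|) hf1.abs] with a ha
        have h3 : Tendsto (fun n => pconst (u (n + m)) (fun y => |f y|) a) atTop (𝓝 |f a|) :=
          ha.comp hu2
        have h4 := (ENNReal.continuous_ofReal.tendsto _).comp h3
        have h5 := h4.add (tendsto_const_nhds (x := ENNReal.ofReal |f a|))
        rw [two_mul]
        exact h5
      · have he : ∀ n : ℕ, (∫⁻ a, (ENNReal.ofReal (pconst (u (n + m)) (fun y => |f y|) a)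
            + ENNReal.ofReal |f a|)) = ∫⁻ a : Fin d → ℝ, 2 * ENNReal.ofReal |f a| := by
          intro n
          have h1 : Measurable (pconst (u (n + m)) (fun y => |f y|)) :=
            st15_pconst_measurable (hpos n) _
          rw [lintegral_add_left'
            (by fun_prop : AEMeasurable (fun a => ENNReal.ofReal
              (pconst (u (n + m)) (fun y => |f y|) a)) (volume : Measure (Fin d → ℝ))),
            st15_lintegral_pconst_abs (hpos n) hf1,
            lintegral_const_mul' 2 _ (by norm_num), two_mul]
        have heq2 : (fun n : ℕ => ∫⁻ a, (ENNReal.ofReal (pconst (u (n + m)) (fun y => |f y|) a)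
            + ENNReal.ofReal |f a|)) = fun _ => ∫⁻ a : Fin d → ℝ, 2 * ENNReal.ofReal |f a| :=
          funext he
        rw [heq2]
        exact tendsto_const_nhds
      · rw [lintegral_const_mul' 2 _ (by norm_num)]
        exact ENNReal.mul_ne_top (by norm_num) hffin
    have step2 : Tendsto Eh (𝓝[>] (0:ℝ)) (𝓝 0) := by
      rw [ENNReal.tendsto_nhds_zero]
      intro ε hε
      have hε2 : (ε / 2 : ℝ≥0∞) ≠ 0 := by
        simp [ENNReal.div_eq_zero_iff, hε.ne']
      have hε4 : (0:ℝ≥0∞) < ε / 2 / 2 := ENNReal.div_pos hε2 (by norm_num)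
      obtain ⟨n0, hn0T, hn0R⟩ :=
        ((ENNReal.tendsto_nhds_zero.1 hTt0 (ε / 2 / 2) hε4).and (eventually_ge_atTop ⌈R0⌉₊)).exists
      have hR0n0 : R0 ≤ (n0:ℝ) := by
        calc R0 ≤ (⌈R0⌉₊ : ℝ) := Nat.le_ceil R0
        _ ≤ n0 := by exact_mod_cast hn0R
      set V : ℝ≥0∞ := volume ((St n0)ᶜ) with hV_def
      have hVlt : V < ⊤ := by
        refine lt_of_le_of_lt (measure_mono ?_)
          (measure_closedBall_lt_top (x := (0 : Fin d → ℝ)) (r := n0))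
        intro x hx
        simp only [hSt_def, Set.mem_compl_iff, Set.mem_setOf_eq, not_le] at hx
        simpa [Metric.mem_closedBall, dist_zero_right] using hx.le
      have hsmul : Tendsto (fun s : ℝ => ENNReal.ofReal (s ^ α) * V) (𝓝[>] (0:ℝ)) (𝓝 0) := by
        have h1 : Tendsto (fun s : ℝ => s ^ α) (𝓝 (0:ℝ)) (𝓝 ((0:ℝ) ^ α)) :=
          Real.continuousAt_rpow_const 0 α (Or.inr hα0.le)
        rw [Real.zero_rpow hα0.ne'] at h1
        have h2 : Tendsto (fun s : ℝ => ENNReal.ofReal (s ^ α)) (𝓝[>] (0:ℝ)) (𝓝 0) := by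
          have h1' : Tendsto (fun s : ℝ => s ^ α) (𝓝[>] (0:ℝ)) (𝓝 0) :=
            h1.mono_left nhdsWithin_le_nhds
          have h3 := (ENNReal.continuous_ofReal.tendsto 0).comp h1'
          simpa [Function.comp_def] using h3
        simpa using ENNReal.Tendsto.mul_const h2 (Or.inr hVlt.ne)
      obtain ⟨s, hsV, hsmem⟩ :=
        ((ENNReal.tendsto_nhds_zero.1 hsmul (ε / 2 / 2) hε4).and self_mem_nhdsWithin).exists
      have hs0 : (0:ℝ) < s := hsmem
      have hDc : Tendsto (fun h => ENNReal.ofReal (s ^ (α - 1)) * D h) (𝓝[>] (0:ℝ)) (𝓝 0) := by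
        simpa using ENNReal.Tendsto.const_mul step3 (Or.inr ENNReal.ofReal_ne_top)
      have pt : ∀ t : ℝ, 0 ≤ t → ENNReal.ofReal (t ^ α)
          ≤ ENNReal.ofReal (s ^ α) + ENNReal.ofReal (s ^ (α - 1)) * ENNReal.ofReal t := by
        intro t ht
        rcases le_or_gt t s with hts | hts
        · exact le_trans (ENNReal.ofReal_le_ofReal (Real.rpow_le_rpow ht hts hα0.le)) le_self_add
        · have htpos : 0 < t := lt_trans hs0 hts
          have h1 : t ^ α = t ^ (α - 1) * t := by
            nth_rewrite 1 [show α = (α - 1) + 1 by ring]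
            rw [Real.rpow_add htpos, Real.rpow_one]
          have h2 : t ^ (α - 1) ≤ s ^ (α - 1) :=
            Real.rpow_le_rpow_of_nonpos hs0 hts.le (by linarith)
          have h3 : t ^ α ≤ s ^ (α - 1) * t := by
            rw [h1]
            exact mul_le_mul_of_nonneg_right h2 htpos.le
          refine le_trans (ENNReal.ofReal_le_ofReal h3) ?_
          rw [ENNReal.ofReal_mul (Real.rpow_nonneg hs0.le _)]
          exact le_add_self
      have tb : ∀ h : ℝ, 0 < h → h ≤ N → ∀ x ∈ St n0,
          ENNReal.ofReal (|pconst h f x - f x| ^ α)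
            ≤ ENNReal.ofReal (G x) + ENNReal.ofReal (G x) := by
        intro h hh hhN x hxS
        have hxR : R0 ≤ ‖x‖ := le_trans hR0n0 hxS
        have hx2N : 2 * N ≤ ‖x‖ := le_trans (le_max_left _ _) hxR
        have hfh : |pconst h f x| ≤ K1 * ‖x‖ ^ (-δ) := by
          have h1 := st15_pconst_tail hf1 hC hN hδpos htail hh hhN hx2N
          rwa [hK1_def]
        have hfx : |f x| ≤ K1 * ‖x‖ ^ (-δ) := hK1f x hx2N
        have h1 : |pconst h f x - f x| ^ α ≤ G x + G x := by
          calc |pconst h f x - f x| ^ α ≤ (|pconst h f x| + |f x|) ^ α := by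
                refine Real.rpow_le_rpow (abs_nonneg _) ?_ hα0.le
                simpa [Real.norm_eq_abs] using norm_sub_le (pconst h f x) (f x)
          _ ≤ |pconst h f x| ^ α + |f x| ^ α :=
                st15_rpow_add_le hα0.le hα1.le (abs_nonneg _) (abs_nonneg _)
          _ ≤ G x + G x := add_le_add (key_t x hxR _ hfh) (key_t x hxR _ hfx)
        exact le_trans (ENNReal.ofReal_le_ofReal h1) ENNReal.ofReal_add_le
      filter_upwards [Ioc_mem_nhdsGT_of_mem (Set.left_mem_Ico.2 hN),
        ENNReal.tendsto_nhds_zero.1 hDc (ε / 2 / 2) hε4] with h hmem hD4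
      obtain ⟨hh, hhN⟩ := hmem
      have hsplit : Eh h = (∫⁻ x in St n0, ENNReal.ofReal (|pconst h f x - f x| ^ α))
          + ∫⁻ x in (St n0)ᶜ, ENNReal.ofReal (|pconst h f x - f x| ^ α) := by
        rw [hE_def]
        exact (lintegral_add_compl _ (hStm n0)).symm
      rw [hsplit]
      have hGmeas : Measurable fun y => ENNReal.ofReal (G y) :=
        ENNReal.measurable_ofReal.comp hGcont.measurable
      have hpart1 : (∫⁻ x in St n0, ENNReal.ofReal (|pconst h f x - f x| ^ α)) ≤ ε / 2 := by
        calc (∫⁻ x in St n0, ENNReal.ofReal (|pconst h f x - f x| ^ α))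
            ≤ ∫⁻ x in St n0, (ENNReal.ofReal (G x) + ENNReal.ofReal (G x)) :=
              setLIntegral_mono (hGmeas.add hGmeas) (tb h hh hhN)
        _ = Tt n0 + Tt n0 := lintegral_add_left hGmeas _
        _ ≤ ε / 2 / 2 + ε / 2 / 2 := add_le_add hn0T hn0T
        _ = ε / 2 := ENNReal.add_halves _
      have hpart2 : (∫⁻ x in (St n0)ᶜ, ENNReal.ofReal (|pconst h f x - f x| ^ α)) ≤ ε / 2 := by
        calc (∫⁻ x in (St n0)ᶜ, ENNReal.ofReal (|pconst h f x - f x| ^ α))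
            ≤ ∫⁻ x in (St n0)ᶜ, (ENNReal.ofReal (s ^ α)
                + ENNReal.ofReal (s ^ (α - 1)) * ENNReal.ofReal |pconst h f x - f x|) :=
              lintegral_mono fun x => pt _ (abs_nonneg _)
        _ = ENNReal.ofReal (s ^ α) * V + ENNReal.ofReal (s ^ (α - 1))
              * ∫⁻ x in (St n0)ᶜ, ENNReal.ofReal |pconst h f x - f x| := by
              rw [lintegral_add_left measurable_const,
                lintegral_const_mul' _ _ ENNReal.ofReal_ne_top, setLIntegral_const]
        _ ≤ ε / 2 / 2 + ε / 2 / 2 := by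
              refine add_le_add hsV ?_
              refine le_trans (mul_le_mul_right (setLIntegral_le_lintegral _ _) _) hD4
        _ = ε / 2 := ENNReal.add_halves _
      calc (∫⁻ x in St n0, ENNReal.ofReal (|pconst h f x - f x| ^ α))
          + ∫⁻ x in (St n0)ᶜ, ENNReal.ofReal (|pconst h f x - f x| ^ α)
          ≤ ε / 2 + ε / 2 := add_le_add hpart1 hpart2
      _ = ε := ENNReal.add_halves ε
    have step1a : ∀ h : ℝ, A h ≤ L + Eh h := by
      intro h
      have hmono : A h ≤ ∫⁻ x, (ENNReal.ofReal (|f x| ^ α)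
          + ENNReal.ofReal (|pconst h f x - f x| ^ α)) :=
        lintegral_mono fun x => st15_ofReal_abs_rpow_le hα0.le hα1.le _ _
      have haem : AEMeasurable (fun x => ENNReal.ofReal (|f x| ^ α))
          (volume : Measure (Fin d → ℝ)) := by fun_prop
      rwa [lintegral_add_left' haem _] at hmono
    have step1b : ∀ h : ℝ, 0 < h → L ≤ A h + Eh h := by
      intro h hh
      have hpm : Measurable (pconst h f) := st15_pconst_measurable hh f
      have hmono : L ≤ ∫⁻ x, (ENNReal.ofReal (|pconst h f x| ^ α)
          + ENNReal.ofReal (|pconst h f x - f x| ^ α)) := by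
        refine lintegral_mono fun x => ?_
        have h1 := st15_ofReal_abs_rpow_le hα0.le hα1.le (f x) (pconst h f x)
        rwa [abs_sub_comm] at h1
      have hmeas : AEMeasurable (fun x => ENNReal.ofReal (|pconst h f x| ^ α))
          (volume : Measure (Fin d → ℝ)) := by fun_prop
      rwa [lintegral_add_left' hmeas _] at hmono
    have hmain : Tendsto A (𝓝[>] (0:ℝ)) (𝓝 L) := by
      rw [ENNReal.tendsto_nhds hL]
      intro ε hε
      filter_upwards [ENNReal.tendsto_nhds_zero.1 step2 ε hε, self_mem_nhdsWithin] with h hEh hh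
      refine Set.mem_Icc.2 ⟨?_, ?_⟩
      · exact tsub_le_iff_right.2 ((step1b h hh).trans (add_le_add_right hEh _))
      · exact (step1a h).trans (add_le_add_right hEh _)
    have hfeq : ∫ x, |f x| ^ α = L.toReal := by
      rw [hL_def]
      exact integral_eq_lintegral_of_nonneg_ae
        (Eventually.of_forall fun x => Real.rpow_nonneg (abs_nonneg _) _) hfαm
    rw [hfeq]
    refine Filter.Tendsto.congr' ?_ ((ENNReal.tendsto_toReal hL).comp hmain)
    filter_upwards [self_mem_nhdsWithin] with h hh
    have hpm : Measurable (pconst h f) := st15_pconst_measurable hh f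
    have hsm : AEStronglyMeasurable (fun x => |pconst h f x| ^ α)
        (volume : Measure (Fin d → ℝ)) := by
      have h1 : Measurable fun x => |pconst h f x| ^ α := by fun_prop
      exact h1.aestronglyMeasurable
    exact (integral_eq_lintegral_of_nonneg_ae
      (Eventually.of_forall fun x => Real.rpow_nonneg (abs_nonneg _) _) hsm).symm
  · -- Part 2
    intro ε hε
    set e : ℝ := (d:ℝ) / α - d with he_def
    have he : 0 < e := by
      have h1 : (d:ℝ) < (d:ℝ) / α := by
        rw [lt_div_iff₀ hα0]
        nlinarith
      rw [he_def]
      linarith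
    set I := ∫ x : Fin d → ℝ, |f x| with hI
    have hbound : ∀ h : ℝ, 0 < h → ∀ k : Fin d → ℤ, |discr α h f k| ≤ h ^ e * I := by
      intro h hh k
      rw [discr, abs_mul, abs_of_pos (Real.rpow_pos_of_pos hh _)]
      refine mul_le_mul_of_nonneg_left ?_ (Real.rpow_nonneg hh.le _)
      calc |∫ x in cell d h k, f x| ≤ ∫ x in cell d h k, |f x| := by
            simpa [Real.norm_eq_abs] using
              norm_integral_le_integral_norm (μ := volume.restrict (cell d h k)) f
      _ ≤ I := setIntegral_le_integral hf1.abs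
          (MeasureTheory.ae_of_all _ fun y => abs_nonneg (f y))
    have htend : Tendsto (fun h : ℝ => h ^ e * I) (𝓝[>] (0:ℝ)) (𝓝 0) := by
      have h1 : Tendsto (fun h : ℝ => h ^ e) (𝓝 (0:ℝ)) (𝓝 ((0:ℝ) ^ e)) :=
        Real.continuousAt_rpow_const 0 e (Or.inr he.le)
      rw [Real.zero_rpow he.ne'] at h1
      simpa using (h1.mono_left nhdsWithin_le_nhds).mul_const I
    filter_upwards [htend.eventually_lt_const hε, self_mem_nhdsWithin] with h h2 hh
    intro k
    exact le_trans (hbound h hh k) h2.le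

end
end
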